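/- arXiv:2503.08863 — 7 statements merged into one kernel-verified Lean document; each statement's English description precedes it below -/
import Mathlib

section
/- Let T be a finite set of 3D items whose widths and depths all lie in (0,1] and whose heights are all at most h_max, for some h_max ∈ (0,1]. Then all items of T can be packed into the strip [0,1]×[0,1]×[0, 4·v(T) + 8·h_max]. -/
/-- The open region occupied by a 3D item of width `w`, depth `d`, height `h`
placed with its bottom-left-back corner at `(x, y, z)`. -/
def ItemRegion (w d h x y z : ℝ) : Set (ℝ × ℝ × ℝ) :=
  Set.Ioo x (x + w) ×ˢ (Set.Ioo y (y + d) ×ˢ Set.Ioo z (z + h))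

/-- `IsPacking T w d h W D H x y z` : the placement `(x, y, z)` is a feasible
axis-aligned non-overlapping packing of the items of `T` (with dimensions
`w`, `d`, `h`) into the box `[0,W] × [0,D] × [0,H]`. -/
def IsPacking {ι : Type*} (T : Finset ι) (w d h : ι → ℝ) (W D H : ℝ)
    (x y z : ι → ℝ) : Prop :=
  (∀ i ∈ T, 0 ≤ x i ∧ x i + w i ≤ W ∧ 0 ≤ y i ∧ y i + d i ≤ D ∧
      0 ≤ z i ∧ z i + h i ≤ H) ∧
  (∀ i ∈ T, ∀ j ∈ T, i ≠ j →
    Disjoint (ItemRegion (w i) (d i) (h i) (x i) (y i) (z i))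
             (ItemRegion (w j) (d j) (h j) (x j) (y j) (z j)))

/-- The items of `T` can be packed into the box `[0,W] × [0,D] × [0,H]`. -/
def CanPack {ι : Type*} (T : Finset ι) (w d h : ι → ℝ) (W D H : ℝ) : Prop :=
  ∃ x y z : ι → ℝ, IsPacking T w d h W D H x y z


/-!
Sort the items of a class by a key (their height, say), cut the sorted list greedily into shelves
whose total size (width, depth or base area) is at most `C`, pack every shelf in a slab as thick as
its first item, and stack the slabs: Next-Fit Decreasing Height. If every size is at most
`smax < C`, every shelf but the last is filled beyond `C - smax`, and the next slab is no thicker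
than any item of that shelf; hence all slabs but the first have total thickness at most
`(∑ size · key) / (C - smax)`, while the first costs at most `hmax`.

Items with `w, d > 1/2` are simply piled up, with height at most `4 v`. Items with `w ≤ 1/2 < d`
go in shelves that are single rows along `x`, items with `w ≤ 1/2` and `1/4 < d ≤ 1/2` in shelves of
two such rows, and items with `w, d ≤ 1/4` in layers of base area at most `9/16`, each packed again by
NFDH. In every case the bound is `hmax + 4 v`; the classes with `w` and `d` exchanged are handled
by symmetry, and stacking all classes gives height `5 hmax + 4 v(T)`.
-/

open Finset

section

variable {ι : Type*}

section Geometry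

variable {w d h x y z w' d' h' x' y' z' : ℝ}

lemma mem_itemRegion {p : ℝ × ℝ × ℝ} :
    p ∈ ItemRegion w d h x y z ↔
      (x < p.1 ∧ p.1 < x + w) ∧ (y < p.2.1 ∧ p.2.1 < y + d) ∧ (z < p.2.2 ∧ p.2.2 < z + h) :=
  Iff.rfl

lemma disjoint_itemRegion_of_add_le (hz : z + h ≤ z') :
    Disjoint (ItemRegion w d h x y z) (ItemRegion w' d' h' x' y' z') :=
  Set.disjoint_left.2 fun p hp hp' => by
    rw [mem_itemRegion] at hp hp'
    linarith [hp.2.2.2, hp'.2.2.1]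

lemma itemRegion_add (c : ℝ) :
    ItemRegion w d h x y (z + c) =
      (fun p : ℝ × ℝ × ℝ => (p.1, p.2.1, p.2.2 - c)) ⁻¹' ItemRegion w d h x y z := by
  ext p
  simp only [Set.mem_preimage, mem_itemRegion]
  constructor <;> rintro ⟨hx, hy, hz1, hz2⟩ <;> exact ⟨hx, hy, by linarith, by linarith⟩

lemma itemRegion_swap_xy :
    ItemRegion w d h x y z =
      (fun p : ℝ × ℝ × ℝ => (p.2.1, p.1, p.2.2)) ⁻¹' ItemRegion d w h y x z := by
  ext p
  simp only [Set.mem_preimage, mem_itemRegion]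
  tauto

lemma itemRegion_swap_xz :
    ItemRegion w d h x y z =
      (fun p : ℝ × ℝ × ℝ => (p.2.2, p.2.1, p.1)) ⁻¹' ItemRegion h d w z y x := by
  ext p
  simp only [Set.mem_preimage, mem_itemRegion]
  tauto

lemma itemRegion_swap_yz :
    ItemRegion w d h x y z =
      (fun p : ℝ × ℝ × ℝ => (p.1, p.2.2, p.2.1)) ⁻¹' ItemRegion w h d x z y := by
  ext p
  simp only [Set.mem_preimage, mem_itemRegion]
  tauto

end Geometry

namespace CanPack

variable {S S₁ S₂ : Finset ι} {w d h : ι → ℝ} {W D H W' D' H' H₁ H₂ : ℝ}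

lemma mono (hW : W ≤ W') (hD : D ≤ D') (hH : H ≤ H') (hS : CanPack S w d h W D H) :
    CanPack S w d h W' D' H' := by
  obtain ⟨x, y, z, hin, hdisj⟩ := hS
  refine ⟨x, y, z, fun i hi => ?_, hdisj⟩
  obtain ⟨h1, h2, h3, h4, h5, h6⟩ := hin i hi
  exact ⟨h1, h2.trans hW, h3, h4.trans hD, h5, h6.trans hH⟩

lemma mono_height (hH : H ≤ H') (hS : CanPack S w d h W D H) : CanPack S w d h W D H' :=
  hS.mono le_rfl le_rfl hH

lemma swap_xy (hS : CanPack S d w h D W H) : CanPack S w d h W D H := by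
  obtain ⟨x, y, z, hin, hdisj⟩ := hS
  refine ⟨y, x, z, fun i hi => ?_, fun i hi j hj hij => ?_⟩
  · obtain ⟨h1, h2, h3, h4, h5, h6⟩ := hin i hi
    exact ⟨h3, h4, h1, h2, h5, h6⟩
  · rw [itemRegion_swap_xy, itemRegion_swap_xy (w := w j)]
    exact (hdisj i hi j hj hij).preimage _

lemma swap_xz (hS : CanPack S h d w H D W) : CanPack S w d h W D H := by
  obtain ⟨x, y, z, hin, hdisj⟩ := hS
  refine ⟨z, y, x, fun i hi => ?_, fun i hi j hj hij => ?_⟩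
  · obtain ⟨h1, h2, h3, h4, h5, h6⟩ := hin i hi
    exact ⟨h5, h6, h3, h4, h1, h2⟩
  · rw [itemRegion_swap_xz, itemRegion_swap_xz (w := w j)]
    exact (hdisj i hi j hj hij).preimage _

lemma swap_yz (hS : CanPack S w h d W H D) : CanPack S w d h W D H := by
  obtain ⟨x, y, z, hin, hdisj⟩ := hS
  refine ⟨x, z, y, fun i hi => ?_, fun i hi j hj hij => ?_⟩
  · obtain ⟨h1, h2, h3, h4, h5, h6⟩ := hin i hi
    exact ⟨h1, h2, h5, h6, h3, h4⟩
  · rw [itemRegion_swap_yz, itemRegion_swap_yz (w := w j)]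
    exact (hdisj i hi j hj hij).preimage _

variable [DecidableEq ι]

lemma union (hH₁ : 0 ≤ H₁) (hH₂ : 0 ≤ H₂) (h₁ : CanPack S₁ w d h W D H₁)
    (h₂ : CanPack S₂ w d h W D H₂) : CanPack (S₁ ∪ S₂) w d h W D (H₁ + H₂) := by
  obtain ⟨x₁, y₁, z₁, hin₁, hdisj₁⟩ := h₁
  obtain ⟨x₂, y₂, z₂, hin₂, hdisj₂⟩ := h₂
  have mem₂ : ∀ {i}, i ∈ S₁ ∪ S₂ → i ∉ S₁ → i ∈ S₂ := fun hi hi₁ =>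
    (mem_union.1 hi).resolve_left hi₁
  have sep : ∀ i ∈ S₁, ∀ j ∈ S₂, z₁ i + h i ≤ z₂ j + H₁ := fun i hi j hj => by
    linarith [(hin₁ i hi).2.2.2.2.2, (hin₂ j hj).2.2.2.2.1]
  refine ⟨fun i => if i ∈ S₁ then x₁ i else x₂ i, fun i => if i ∈ S₁ then y₁ i else y₂ i,
    fun i => if i ∈ S₁ then z₁ i else z₂ i + H₁, fun i hi => ?_, fun i hi j hj hij => ?_⟩
  · by_cases hi₁ : i ∈ S₁ <;> simp only [hi₁, if_true, if_false]
    · obtain ⟨h1, h2, h3, h4, h5, h6⟩ := hin₁ i hi₁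
      exact ⟨h1, h2, h3, h4, h5, by linarith⟩
    · obtain ⟨h1, h2, h3, h4, h5, h6⟩ := hin₂ i (mem₂ hi hi₁)
      exact ⟨h1, h2, h3, h4, by linarith, by linarith⟩
  · by_cases hi₁ : i ∈ S₁ <;> by_cases hj₁ : j ∈ S₁ <;> simp only [hi₁, hj₁, if_true, if_false]
    · exact hdisj₁ i hi₁ j hj₁ hij
    · exact disjoint_itemRegion_of_add_le (sep i hi₁ j (mem₂ hj hj₁))
    · exact (disjoint_itemRegion_of_add_le (sep j hj₁ i (mem₂ hi hi₁))).symm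
    · rw [itemRegion_add, itemRegion_add]
      exact (hdisj₂ i (mem₂ hi hi₁) j (mem₂ hj hj₁) hij).preimage _

lemma union_y {D₁ D₂ : ℝ} (hD₁ : 0 ≤ D₁) (hD₂ : 0 ≤ D₂) (h₁ : CanPack S₁ w d h W D₁ H)
    (h₂ : CanPack S₂ w d h W D₂ H) : CanPack (S₁ ∪ S₂) w d h W (D₁ + D₂) H :=
  swap_yz (union hD₁ hD₂ h₁.swap_yz h₂.swap_yz)

lemma of_filter (p : ι → Prop) [DecidablePred p] (h₁ : CanPack (S.filter p) w d h W D H₁)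
    (h₂ : CanPack (S.filter (¬p ·)) w d h W D H₂) (hH₁ : 0 ≤ H₁) (hH₂ : 0 ≤ H₂) :
    CanPack S w d h W D (H₁ + H₂) := by
  simpa only [filter_union_filter_not_eq] using h₁.union hH₁ hH₂ h₂

end CanPack

section Basic

variable {S : Finset ι} {w d h : ι → ℝ} {W D H : ℝ}

lemma canPack_empty : CanPack ∅ w d h W D H :=
  ⟨0, 0, 0, by simp, by simp⟩

lemma canPack_singleton {i : ι} (hw : w i ≤ W) (hd : d i ≤ D) (hh : h i ≤ H) :
    CanPack {i} w d h W D H :=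
  ⟨0, 0, 0, by simp [hw, hd, hh], by simp⟩

variable [DecidableEq ι]

lemma canPack_tower (hS : ∀ i ∈ S, w i ≤ W ∧ d i ≤ D ∧ 0 ≤ h i) :
    CanPack S w d h W D (∑ i ∈ S, h i) := by
  induction S using Finset.induction_on with
  | empty => exact canPack_empty
  | insert i S hi ih =>
    obtain ⟨hw, hd, hh⟩ := hS i (mem_insert_self i S)
    have hS' := fun j hj => hS j (mem_insert_of_mem hj)
    rw [sum_insert hi, insert_eq]
    exact (canPack_singleton hw hd le_rfl).union hh
      (sum_nonneg fun j hj => (hS' j hj).2.2) (ih hS')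

lemma canPack_row (hS : ∀ i ∈ S, 0 ≤ w i ∧ d i ≤ D ∧ h i ≤ H) :
    CanPack S w d h (∑ i ∈ S, w i) D H :=
  CanPack.swap_xz <| canPack_tower fun i hi => ⟨(hS i hi).2.2, (hS i hi).2.1, (hS i hi).1⟩

end Basic

section Shelves

variable [DecidableEq ι] {S : Finset ι}

lemma exists_partition_abs_sum_sub_sum_le (S : Finset ι) (u : ι → ℝ) {c : ℝ} (hc : 0 ≤ c)
    (hu : ∀ i ∈ S, 0 ≤ u i ∧ u i ≤ c) :
    ∃ S₁ S₂ : Finset ι, Disjoint S₁ S₂ ∧ S₁ ∪ S₂ = S ∧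
      |∑ i ∈ S₁, u i - ∑ i ∈ S₂, u i| ≤ c := by
  induction S using Finset.induction_on with
  | empty => exact ⟨∅, ∅, disjoint_empty_left _, union_empty _, by simpa using hc⟩
  | insert a S ha ih =>
    obtain ⟨S₁, S₂, hdisj, rfl, hbal⟩ := ih fun i hi => hu i (mem_insert_of_mem hi)
    obtain ⟨hua, hua'⟩ := hu a (mem_insert_self _ _)
    have ha₁ : a ∉ S₁ := fun h => ha (mem_union_left _ h)
    have ha₂ : a ∉ S₂ := fun h => ha (mem_union_right _ h)
    rw [abs_le] at hbal
    rcases le_total (∑ i ∈ S₁, u i) (∑ i ∈ S₂, u i) with hle | hle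
    · refine ⟨insert a S₁, S₂, disjoint_insert_left.2 ⟨ha₂, hdisj⟩, insert_union _ _ _, ?_⟩
      rw [sum_insert ha₁, abs_le]
      constructor <;> linarith
    · refine ⟨S₁, insert a S₂, disjoint_insert_right.2 ⟨ha₁, hdisj⟩, union_insert _ _ _, ?_⟩
      rw [sum_insert ha₂, abs_le]
      constructor <;> linarith

variable {w d h : ι → ℝ} {H : ℝ}

lemma canPack_two_rows (hS : ∀ i ∈ S, 0 ≤ w i ∧ w i ≤ 1 / 2 ∧ d i ≤ 1 / 2 ∧ h i ≤ H)
    (hsum : ∑ i ∈ S, w i ≤ 3 / 2) : CanPack S w d h 1 1 H := by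
  obtain ⟨S₁, S₂, hdisj, rfl, hbal⟩ := exists_partition_abs_sum_sub_sum_le _ w
    (by norm_num : (0 : ℝ) ≤ 1 / 2) fun i hi => ⟨(hS i hi).1, (hS i hi).2.1⟩
  rw [sum_union hdisj] at hsum
  rw [abs_le] at hbal
  have row : ∀ S' ⊆ S₁ ∪ S₂, ∑ i ∈ S', w i ≤ 1 → CanPack S' w d h 1 (1 / 2) H :=
    fun S' hS' hw => (canPack_row fun i hi =>
      ⟨(hS i (hS' hi)).1, (hS i (hS' hi)).2.2⟩).mono hw le_rfl le_rfl
  simpa only [add_halves] using (row S₁ subset_union_left (by linarith)).union_y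
    (by norm_num) (by norm_num) (row S₂ subset_union_right (by linarith))

end Shelves

lemma List.exists_greedy_prefix (s : ι → ℝ) :
    ∀ (L : List ι) {C : ℝ}, 0 ≤ C → ∃ c r : List ι, L = c ++ r ∧ (c.map s).sum ≤ C ∧
      ∀ f r', r = f :: r' → C < (c.map s).sum + s f
  | [], _, hC => ⟨[], [], rfl, by simpa using hC, by simp⟩
  | i :: t, C, hC => by
    by_cases hi : s i ≤ C
    · obtain ⟨c, r, rfl, hc, hfull⟩ := exists_greedy_prefix s t (sub_nonneg.2 hi)
      refine ⟨i :: c, r, rfl, by simp only [List.map_cons, List.sum_cons]; linarith,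
        fun f r' hr => ?_⟩
      have := hfull f r' hr
      simp only [List.map_cons, List.sum_cons]
      linarith
    · exact ⟨[], i :: t, rfl, by simpa using hC, fun f r' hr => by
        cases hr
        simpa using lt_of_not_ge hi⟩

/-- `P S H`: the items of `S` fit into a slab of thickness `H` along a fixed axis. -/
structure IsStackable (P : Finset ι → ℝ → Prop) : Prop where
  mono : ∀ {S H H'}, H ≤ H' → P S H → P S H'
  union [DecidableEq ι] : ∀ {S₁ S₂ H₁ H₂}, 0 ≤ H₁ → 0 ≤ H₂ → P S₁ H₁ → P S₂ H₂ →
    P (S₁ ∪ S₂) (H₁ + H₂)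

section NextFitDecreasing

variable [DecidableEq ι] {P : Finset ι → ℝ → Prop} {s k : ι → ℝ} {S₀ : Finset ι} {C smax : ℝ}

lemma IsStackable.nextFitDecreasing_list (hP : IsStackable P)
    (shelf : ∀ S ⊆ S₀, ∀ H, (∀ i ∈ S, k i ≤ H) → ∑ i ∈ S, s i ≤ C → P S H)
    (hs : ∀ i ∈ S₀, 0 ≤ s i ∧ s i ≤ smax) (hk : ∀ i ∈ S₀, 0 ≤ k i)
    (hsmax : 0 ≤ smax) (hC : smax < C) (L : List ι) (hnd : L.Nodup)
    (hsort : L.Pairwise fun i j => k j ≤ k i) (hL : ∀ i ∈ L, i ∈ S₀) (K : ℝ)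
    (hK : ∀ i ∈ L, k i ≤ K) :
    P L.toFinset (K + (L.map fun i => s i * k i).sum / (C - smax)) := by
  induction hn : L.length using Nat.strong_induction_on generalizing L K with
  | _ n ih =>
  have hδ : 0 < C - smax := sub_pos.2 hC
  obtain ⟨c, r, rfl, hc, hfull⟩ := L.exists_greedy_prefix s (hsmax.trans hC.le)
  obtain ⟨-, hsr, hcr⟩ := List.pairwise_append.1 hsort
  have hsk : ∀ l : List ι, (∀ i ∈ l, i ∈ S₀) → 0 ≤ (l.map fun i => s i * k i).sum :=
    fun l hl => List.sum_nonneg <| by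
      simpa using fun i hi => mul_nonneg (hs i (hl i hi)).1 (hk i (hl i hi))
  have hcS : ∀ i ∈ c, i ∈ S₀ := fun i hi => hL i (List.mem_append_left _ hi)
  have hrS : ∀ i ∈ r, i ∈ S₀ := fun i hi => hL i (List.mem_append_right _ hi)
  have hshelf : P c.toFinset K :=
    shelf _ (fun i hi => hcS i (List.mem_toFinset.1 hi)) K
      (fun i hi => hK i (List.mem_append_left _ (List.mem_toFinset.1 hi)))
      (by rwa [List.sum_toFinset _ hnd.of_append_left])
  rw [List.toFinset_append, List.map_append, List.sum_append, add_div]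
  rcases r with _ | ⟨f, r⟩
  · simpa using hP.mono (le_add_of_nonneg_right (div_nonneg (hsk c hcS) hδ.le)) hshelf
  have hsf := (hs f (hrS f List.mem_cons_self)).2
  have hkf := hk f (hrS f List.mem_cons_self)
  have hcne : c ≠ [] := by
    rintro rfl
    have := hfull f r rfl
    simp only [List.map_nil, List.sum_nil, zero_add] at this
    linarith
  obtain ⟨i, hi⟩ := List.exists_mem_of_ne_nil c hcne
  have hkey : (C - smax) * k f ≤ (c.map fun i => s i * k i).sum := by
    have hfill : C - smax ≤ (c.map s).sum := by linarith [hfull f r rfl]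
    calc (C - smax) * k f ≤ (c.map s).sum * k f := mul_le_mul_of_nonneg_right hfill hkf
      _ = (c.map fun j => s j * k f).sum := (List.sum_map_mul_right _ _ _).symm
      _ ≤ (c.map fun i => s i * k i).sum := List.sum_le_sum fun j hj =>
          mul_le_mul_of_nonneg_left (hcr j hj f List.mem_cons_self) (hs j (hcS j hj)).1
  have hrest := ih (f :: r).length
    (by simp only [List.length_append] at hn; have := List.length_pos_iff.2 hcne; omega)
    (f :: r) hnd.of_append_right hsr hrS (k f) (fun j hj => by
      rcases List.mem_cons.1 hj with rfl | hj
      · exact le_rfl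
      · exact (List.pairwise_cons.1 hsr).1 j hj) rfl
  refine hP.mono ?_ (hP.union ((hk i (hcS i hi)).trans (hK i (List.mem_append_left _ hi)))
    (add_nonneg hkf (div_nonneg (hsk _ hrS) hδ.le)) hshelf hrest)
  have : k f ≤ (c.map fun i => s i * k i).sum / (C - smax) := by
    rw [le_div_iff₀ hδ]
    linarith
  linarith

theorem IsStackable.nextFitDecreasing (hP : IsStackable P)
    (shelf : ∀ S ⊆ S₀, ∀ H, (∀ i ∈ S, k i ≤ H) → ∑ i ∈ S, s i ≤ C → P S H)
    (hs : ∀ i ∈ S₀, 0 ≤ s i ∧ s i ≤ smax) {K : ℝ} (hk : ∀ i ∈ S₀, 0 ≤ k i ∧ k i ≤ K)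
    (hsmax : 0 ≤ smax) (hC : smax < C) :
    P S₀ (K + (∑ i ∈ S₀, s i * k i) / (C - smax)) := by
  set L := S₀.toList.mergeSort fun i j => decide (k j ≤ k i)
  have hperm : L.Perm S₀.toList := List.mergeSort_perm _ _
  have hnd : L.Nodup := hperm.nodup_iff.2 S₀.nodup_toList
  have hLS : L.toFinset = S₀ := by rw [List.toFinset_eq_of_perm _ _ hperm, toList_toFinset]
  have hmem : ∀ i ∈ L, i ∈ S₀ := fun i hi => hLS ▸ List.mem_toFinset.2 hi
  have hsort : L.Pairwise fun i j => k j ≤ k i := by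
    refine (List.pairwise_mergeSort (fun a b c hab hbc => ?_) (fun a b => ?_) _).imp
      fun h => of_decide_eq_true h
    · simp only [decide_eq_true_eq] at hab hbc ⊢
      exact hbc.trans hab
    · simpa using le_total _ _
  have := hP.nextFitDecreasing_list shelf hs (fun i hi => (hk i hi).1) hsmax hC L hnd hsort
    hmem K fun i hi => (hk i (hmem i hi)).2
  rwa [← List.sum_toFinset _ hnd, hLS] at this

end NextFitDecreasing

section Classes

lemma isStackable_canPack_height (w d h : ι → ℝ) (W D : ℝ) :
    IsStackable fun S H => CanPack S w d h W D H :=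
  ⟨CanPack.mono_height, CanPack.union⟩

lemma isStackable_canPack_depth (w d h : ι → ℝ) (W H : ℝ) :
    IsStackable fun S D => CanPack S w d h W D H :=
  ⟨fun hD hS => hS.mono le_rfl hD le_rfl, CanPack.union_y⟩

variable [DecidableEq ι] {S : Finset ι} {w d h : ι → ℝ} {hmax H : ℝ}

-- `1/4 + (4/3)·(9/16) = 1`: the largest area for which the NFDH bound fits the unit square.
lemma canPack_layer (hS : ∀ i ∈ S, 0 ≤ w i ∧ w i ≤ 1 / 4 ∧ 0 ≤ d i ∧ d i ≤ 1 / 4 ∧ h i ≤ H)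
    (harea : ∑ i ∈ S, w i * d i ≤ 9 / 16) : CanPack S w d h 1 1 H := by
  have := (isStackable_canPack_depth w d h 1 H).nextFitDecreasing (S₀ := S) (C := 1)
    (fun S' hS' D hD hw => (canPack_row fun i hi =>
      ⟨(hS i (hS' hi)).1, hD i hi, (hS i (hS' hi)).2.2.2.2⟩).mono hw le_rfl le_rfl)
    (fun i hi => ⟨(hS i hi).1, (hS i hi).2.1⟩) (fun i hi => ⟨(hS i hi).2.2.1, (hS i hi).2.2.2.1⟩)
    (by norm_num) (by norm_num)
  exact this.mono le_rfl (by norm_num; linarith) le_rfl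

lemma canPack_tiny
    (hS : ∀ i ∈ S, 0 ≤ w i ∧ w i ≤ 1 / 4 ∧ 0 ≤ d i ∧ d i ≤ 1 / 4 ∧ 0 ≤ h i ∧ h i ≤ hmax) :
    CanPack S w d h 1 1 (hmax + 2 * ∑ i ∈ S, w i * d i * h i) := by
  have := (isStackable_canPack_height w d h 1 1).nextFitDecreasing (s := fun i => w i * d i)
    (C := 9 / 16) (smax := 1 / 16)
    (fun S' hS' H hH harea => canPack_layer (fun i hi => ⟨(hS i (hS' hi)).1, (hS i (hS' hi)).2.1,
      (hS i (hS' hi)).2.2.1, (hS i (hS' hi)).2.2.2.1, hH i hi⟩) harea)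
    (fun i hi => by
      obtain ⟨hw, hw', hd, hd', -⟩ := hS i hi
      exact ⟨mul_nonneg hw hd, by nlinarith⟩)
    (fun i hi => (hS i hi).2.2.2.2) (by norm_num) (by norm_num)
  convert this using 2
  ring

lemma canPack_large (hS : ∀ i ∈ S, 1 / 2 ≤ w i ∧ w i ≤ 1 ∧ 1 / 2 ≤ d i ∧ d i ≤ 1 ∧ 0 ≤ h i) :
    CanPack S w d h 1 1 (4 * ∑ i ∈ S, w i * d i * h i) := by
  refine (canPack_tower fun i hi =>
    ⟨(hS i hi).2.1, (hS i hi).2.2.2.1, (hS i hi).2.2.2.2⟩).mono_height ?_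
  rw [mul_sum]
  exact sum_le_sum fun i hi => by
    obtain ⟨hw, -, hd, -, hh⟩ := hS i hi
    nlinarith [mul_le_mul hw hd (by norm_num) (by linarith)]

lemma canPack_deep
    (hS : ∀ i ∈ S, 0 ≤ w i ∧ w i ≤ 1 / 2 ∧ 1 / 2 ≤ d i ∧ d i ≤ 1 ∧ 0 ≤ h i ∧ h i ≤ hmax) :
    CanPack S w d h 1 1 (hmax + 4 * ∑ i ∈ S, w i * d i * h i) := by
  have := (isStackable_canPack_height w d h 1 1).nextFitDecreasing (s := w) (C := 1) (smax := 1 / 2)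
    (fun S' hS' H hH hw => (canPack_row fun i hi =>
      ⟨(hS i (hS' hi)).1, (hS i (hS' hi)).2.2.2.1, hH i hi⟩).mono hw le_rfl le_rfl)
    (fun i hi => ⟨(hS i hi).1, (hS i hi).2.1⟩) (fun i hi => (hS i hi).2.2.2.2)
    (by norm_num) (by norm_num)
  refine this.mono_height ?_
  have : ∑ i ∈ S, w i * h i ≤ 2 * ∑ i ∈ S, w i * d i * h i := by
    rw [mul_sum]
    exact sum_le_sum fun i hi => by
      obtain ⟨hw, -, hd, -, hh, -⟩ := hS i hi
      nlinarith [mul_nonneg hw hh]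
  norm_num
  linarith

lemma canPack_halfDeep
    (hS : ∀ i ∈ S, 0 ≤ w i ∧ w i ≤ 1 / 2 ∧ 1 / 4 ≤ d i ∧ d i ≤ 1 / 2 ∧ 0 ≤ h i ∧ h i ≤ hmax) :
    CanPack S w d h 1 1 (hmax + 4 * ∑ i ∈ S, w i * d i * h i) := by
  have := (isStackable_canPack_height w d h 1 1).nextFitDecreasing (s := w) (C := 3 / 2)
    (smax := 1 / 2)
    (fun S' hS' H hH hw => canPack_two_rows (fun i hi =>
      ⟨(hS i (hS' hi)).1, (hS i (hS' hi)).2.1, (hS i (hS' hi)).2.2.2.1, hH i hi⟩) hw)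
    (fun i hi => ⟨(hS i hi).1, (hS i hi).2.1⟩) (fun i hi => (hS i hi).2.2.2.2)
    (by norm_num) (by norm_num)
  refine this.mono_height ?_
  have : ∑ i ∈ S, w i * h i ≤ 4 * ∑ i ∈ S, w i * d i * h i := by
    rw [mul_sum]
    exact sum_le_sum fun i hi => by
      obtain ⟨hw, -, hd, -, hh, -⟩ := hS i hi
      nlinarith [mul_nonneg hw hh]
  norm_num
  linarith

lemma canPack_narrow (hmax_nonneg : 0 ≤ hmax)
    (hS : ∀ i ∈ S, 0 ≤ w i ∧ w i ≤ 1 / 2 ∧ 1 / 4 ≤ d i ∧ d i ≤ 1 ∧ 0 ≤ h i ∧ h i ≤ hmax) :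
    CanPack S w d h 1 1 (2 * hmax + 4 * ∑ i ∈ S, w i * d i * h i) := by
  have hv : ∀ q : ι → Prop, [DecidablePred q] → 0 ≤ hmax + 4 * ∑ i ∈ S.filter q, w i * d i * h i :=
    fun q _ => add_nonneg hmax_nonneg <| mul_nonneg zero_le_four <| sum_nonneg fun i hi => by
      obtain ⟨hw, -, hd, -, hh, -⟩ := hS i (mem_of_mem_filter i hi)
      have : 0 ≤ d i := by linarith
      positivity
  have := CanPack.of_filter (fun i => 1 / 2 ≤ d i)
    (canPack_deep (hmax := hmax) fun i hi => by
      obtain ⟨hi, hd⟩ := mem_filter.1 hi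
      obtain ⟨hw, hw', -, hd', hh⟩ := hS i hi
      exact ⟨hw, hw', hd, hd', hh⟩)
    (canPack_halfDeep fun i hi => by
      obtain ⟨hi, hd⟩ := mem_filter.1 hi
      obtain ⟨hw, hw', hd', -, hh⟩ := hS i hi
      exact ⟨hw, hw', hd', (not_le.1 hd).le, hh⟩)
    (hv _) (hv _)
  refine this.mono_height (le_of_eq ?_)
  rw [← sum_filter_add_sum_filter_not S (fun i => 1 / 2 ≤ d i)]
  ring

lemma canPack_wide (hmax_nonneg : 0 ≤ hmax)
    (hS : ∀ i ∈ S, 1 / 4 ≤ w i ∧ w i ≤ 1 ∧ 0 ≤ d i ∧ d i ≤ 1 / 2 ∧ 0 ≤ h i ∧ h i ≤ hmax) :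
    CanPack S w d h 1 1 (2 * hmax + 4 * ∑ i ∈ S, w i * d i * h i) := by
  have := (canPack_narrow (w := d) (d := w) hmax_nonneg fun i hi => by
    obtain ⟨hw, hw', hd, hd', hh⟩ := hS i hi
    exact ⟨hd, hd', hw, hw', hh⟩).swap_xy
  simpa only [mul_comm (d _) (w _)] using this

lemma canPack_of_sides_le_one (hmax_nonneg : 0 ≤ hmax)
    (hS : ∀ i ∈ S, 0 ≤ w i ∧ w i ≤ 1 ∧ 0 ≤ d i ∧ d i ≤ 1 ∧ 0 ≤ h i ∧ h i ≤ hmax) :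
    CanPack S w d h 1 1 (5 * hmax + 4 * ∑ i ∈ S, w i * d i * h i) := by
  set large := fun i => 1 / 2 < w i ∧ 1 / 2 < d i
  set narrow := fun i => w i ≤ 1 / 2 ∧ 1 / 4 < d i
  set wide := fun i => d i ≤ 1 / 2 ∧ 1 / 4 < w i
  set R₁ := S.filter (¬large ·)
  set R₂ := R₁.filter (¬narrow ·)
  have hR₁ : R₁ ⊆ S := filter_subset _ _
  have hR₂ : R₂ ⊆ S := (filter_subset _ _).trans hR₁
  have hv : ∀ S' ⊆ S, 0 ≤ ∑ i ∈ S', w i * d i * h i := fun S' hS' => sum_nonneg fun i hi => by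
    obtain ⟨hw, -, hd, -, hh, -⟩ := hS i (hS' hi)
    positivity
  have := hv _ (filter_subset large S)
  have := hv _ ((filter_subset narrow R₁).trans hR₁)
  have := hv _ ((filter_subset wide R₂).trans hR₂)
  have := hv _ ((filter_subset (¬wide ·) R₂).trans hR₂)
  refine (CanPack.of_filter large
    (canPack_large fun i hi => by
      obtain ⟨hi, hw, hd⟩ := mem_filter.1 hi
      obtain ⟨-, hw', -, hd', hh, -⟩ := hS i hi
      exact ⟨hw.le, hw', hd.le, hd', hh⟩)
    (CanPack.of_filter narrow
      (canPack_narrow hmax_nonneg fun i hi => by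
        obtain ⟨hi, hw, hd⟩ := mem_filter.1 hi
        obtain ⟨hw₀, -, -, hd', hh⟩ := hS i (hR₁ hi)
        exact ⟨hw₀, hw, hd.le, hd', hh⟩)
      (CanPack.of_filter wide
        (canPack_wide hmax_nonneg fun i hi => by
          obtain ⟨hi, hd, hw⟩ := mem_filter.1 hi
          obtain ⟨-, hw', hd₀, -, hh⟩ := hS i (hR₂ hi)
          exact ⟨hw.le, hw', hd₀, hd, hh⟩)
        (canPack_tiny fun i hi => by
          simp only [mem_filter, large, narrow, wide, not_and_or, not_lt, not_le] at hi
          obtain ⟨⟨⟨hi, hl⟩, hn⟩, hwd⟩ := hi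
          obtain ⟨hw₀, -, hd₀, -, hh⟩ := hS i hi
          refine ⟨hw₀, ?_, hd₀, ?_, hh⟩ <;> grind)
        (by linarith) (by linarith))
      (by linarith) (by linarith))
    (by linarith) (by linarith)).mono_height ?_
  have := sum_filter_add_sum_filter_not S large fun i => w i * d i * h i
  have := sum_filter_add_sum_filter_not R₁ narrow fun i => w i * d i * h i
  have := sum_filter_add_sum_filter_not R₂ wide fun i => w i * d i * h i
  linarith

end Classes

end

theorem stmt0_general {ι : Type*} (T : Finset ι) (w d h : ι → ℝ) (hmax : ℝ)
    (hmax_pos : 0 < hmax)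
    (hdims : ∀ i ∈ T, 0 < w i ∧ w i ≤ 1 ∧ 0 < d i ∧ d i ≤ 1 ∧
      0 < h i ∧ h i ≤ hmax) :
    CanPack T w d h 1 1 (4 * (∑ i ∈ T, w i * d i * h i) + 8 * hmax) := by
  classical
  refine (canPack_of_sides_le_one hmax_pos.le fun i hi => ?_).mono_height (by linarith)
  obtain ⟨hw, hw', hd, hd', hh, hh'⟩ := hdims i hi
  exact ⟨hw.le, hw', hd.le, hd', hh.le, hh'⟩

/-- Any finite set `T` of 3D items with widths and depths in
`(0,1]` and heights in `(0, hmax]` can be packed into the strip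
`[0,1] × [0,1] × [0, 4·v(T) + 8·hmax]`. -/
theorem stmt0 {ι : Type*} (T : Finset ι) (w d h : ι → ℝ) (hmax : ℝ)
    (hmax_pos : 0 < hmax) (hmax_le : hmax ≤ 1)
    (hdims : ∀ i ∈ T, 0 < w i ∧ w i ≤ 1 ∧ 0 < d i ∧ d i ≤ 1 ∧
      0 < h i ∧ h i ≤ hmax) :
    CanPack T w d h 1 1 (4 * (∑ i ∈ T, w i * d i * h i) + 8 * hmax) :=
  stmt0_general T w d h hmax hmax_pos hdims
end

section
/- Let T be a finite set of 3D items whose widths and depths all lie in (0,1] and whose heights are all at most h_max, for some h_max ∈ (0,1], and suppose additionally that every item of T has width at most 1/2 or depth at most 1/2 (or both). Then all items of T can be packed into the strip [0,1]×[0,1]×[0, 3·v(T) + 8·h_max]. -/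
open Finset

def IntervalsApart (a l b m : ℝ) : Prop :=
  a + l ≤ b ∨ b + m ≤ a

theorem intervalsApart_add_const {a l b m : ℝ} (c : ℝ) :
    IntervalsApart (a + c) l (b + c) m ↔ IntervalsApart a l b m := by
  simp only [IntervalsApart, add_right_comm _ c, add_le_add_iff_right]

theorem IntervalsApart.disjoint_Ioo {a l b m : ℝ} (h : IntervalsApart a l b m) :
    Disjoint (Set.Ioo a (a + l)) (Set.Ioo b (b + m)) := by
  rw [Set.Ioo_disjoint_Ioo]
  rcases h with h | h
  · exact min_le_of_left_le (h.trans (le_max_right a b))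
  · exact min_le_of_right_le (h.trans (le_max_left a b))

section

variable {ι : Type*}

theorem exists_greedy_split [DecidableEq ι] (s μ : ι → ℝ) {c : ℝ} (hc : 0 ≤ c)
    (S : Finset ι) (hS : c < ∑ i ∈ S, μ i) :
    ∃ P ⊆ S, ∃ a ∈ S \ P, ∑ i ∈ P, μ i ≤ c ∧ c < ∑ i ∈ P, μ i + μ a ∧
      (∀ i ∈ P, s a ≤ s i) ∧ ∀ j ∈ S \ P, s j ≤ s a := by
  induction S using Finset.strongInduction generalizing c with
  | H S ih =>
  obtain ⟨m, hm, hm_max⟩ := S.exists_max_image s (nonempty_of_sum_ne_zero (hc.trans_lt hS).ne')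
  by_cases hcm : c < μ m
  · exact ⟨∅, empty_subset S, m, by simpa using hm, by simpa using hc, by simpa using hcm,
      by simp, fun j hj => hm_max j (mem_sdiff.1 hj).1⟩
  obtain ⟨P, hPS, a, ha, hPc, hcP, hPa, haR⟩ := ih (S.erase m) (erase_ssubset hm)
    (sub_nonneg.2 (not_lt.1 hcm)) (by linarith [sum_erase_add S μ hm])
  have hmP : m ∉ P := fun hmP => notMem_erase m S (hPS hmP)
  have hrest : S \ insert m P = S.erase m \ P := by rw [sdiff_insert, erase_sdiff_comm]
  refine ⟨insert m P, insert_subset hm (hPS.trans (erase_subset m S)), a, hrest ▸ ha, ?_, ?_, ?_,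
    hrest ▸ haR⟩
  · rw [sum_insert hmP]; linarith
  · rw [sum_insert hmP]; linarith
  · intro i hi
    rcases mem_insert.1 hi with rfl | hi
    · exact hm_max a (mem_of_mem_erase (mem_sdiff.1 ha).1)
    · exact hPa i hi

/-- Nonnegative sides make stacking (`BoxPacking.union_height`) free of side conditions. -/
def BoxPacking (S : Finset ι) (w d h : ι → ℝ) (W D H : ℝ) : Prop :=
  0 ≤ W ∧ 0 ≤ D ∧ 0 ≤ H ∧ ∃ x y z : ι → ℝ,
    (∀ i ∈ S, 0 ≤ x i ∧ x i + w i ≤ W ∧ 0 ≤ y i ∧ y i + d i ≤ D ∧ 0 ≤ z i ∧ z i + h i ≤ H) ∧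
    (S : Set ι).Pairwise fun i j => IntervalsApart (x i) (w i) (x j) (w j) ∨
      IntervalsApart (y i) (d i) (y j) (d j) ∨ IntervalsApart (z i) (h i) (z j) (h j)

namespace BoxPacking

variable {S A B : Finset ι} {w d h : ι → ℝ} {W D H : ℝ}

theorem canPack (hS : BoxPacking S w d h W D H) : CanPack S w d h W D H := by
  obtain ⟨-, -, -, x, y, z, hbox, hsep⟩ := hS
  refine ⟨x, y, z, hbox, fun i hi j hj hij => ?_⟩
  simp only [ItemRegion, Set.disjoint_prod]
  exact (hsep hi hj hij).imp IntervalsApart.disjoint_Ioo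
    (Or.imp IntervalsApart.disjoint_Ioo IntervalsApart.disjoint_Ioo)

theorem mono {W' D' H' : ℝ} (hS : BoxPacking S w d h W D H) (hW : W ≤ W') (hD : D ≤ D')
    (hH : H ≤ H') : BoxPacking S w d h W' D' H' := by
  obtain ⟨hW0, hD0, hH0, x, y, z, hbox, hsep⟩ := hS
  refine ⟨hW0.trans hW, hD0.trans hD, hH0.trans hH, x, y, z, fun i hi => ?_, hsep⟩
  obtain ⟨hx, hxW, hy, hyD, hz, hzH⟩ := hbox i hi
  exact ⟨hx, hxW.trans hW, hy, hyD.trans hD, hz, hzH.trans hH⟩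

theorem swap_width_depth (hS : BoxPacking S w d h W D H) : BoxPacking S d w h D W H := by
  obtain ⟨hW, hD, hH, x, y, z, hbox, hsep⟩ := hS
  refine ⟨hD, hW, hH, y, x, z, fun i hi => ?_, hsep.imp fun i j => or_left_comm.1⟩
  obtain ⟨hx, hxW, hy, hyD, hz, hzH⟩ := hbox i hi
  exact ⟨hy, hyD, hx, hxW, hz, hzH⟩

theorem swap_depth_height (hS : BoxPacking S w d h W D H) : BoxPacking S w h d W H D := by
  obtain ⟨hW, hD, hH, x, y, z, hbox, hsep⟩ := hS
  refine ⟨hW, hH, hD, x, z, y, fun i hi => ?_, hsep.imp fun i j => Or.imp_right Or.symm⟩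
  obtain ⟨hx, hxW, hy, hyD, hz, hzH⟩ := hbox i hi
  exact ⟨hx, hxW, hz, hzH, hy, hyD⟩

theorem union_height [DecidableEq ι] {H₁ H₂ : ℝ} (hAB : Disjoint A B)
    (hA : BoxPacking A w d h W D H₁) (hB : BoxPacking B w d h W D H₂) :
    BoxPacking (A ∪ B) w d h W D (H₁ + H₂) := by
  obtain ⟨hW, hD, hH₁, x₁, y₁, z₁, hbox₁, hsep₁⟩ := hA
  obtain ⟨-, -, hH₂, x₂, y₂, z₂, hbox₂, hsep₂⟩ := hB
  have hnA : ∀ j ∈ B, j ∉ A := fun j hj hjA => disjoint_left.1 hAB hjA hj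
  refine ⟨hW, hD, add_nonneg hH₁ hH₂, fun i => if i ∈ A then x₁ i else x₂ i,
    fun i => if i ∈ A then y₁ i else y₂ i, fun i => if i ∈ A then z₁ i else z₂ i + H₁, ?_, ?_⟩
  · intro i hi
    rcases mem_union.1 hi with hi | hi
    · obtain ⟨hx, hxW, hy, hyD, hz, hzH⟩ := hbox₁ i hi
      simp only [hi, if_true]
      exact ⟨hx, hxW, hy, hyD, hz, by linarith⟩
    · obtain ⟨hx, hxW, hy, hyD, hz, hzH⟩ := hbox₂ i hi
      simp only [hnA i hi, if_false]
      exact ⟨hx, hxW, hy, hyD, by linarith, by linarith⟩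
  · intro i hi j hj hij
    simp only [coe_union, Set.mem_union, mem_coe] at hi hj
    rcases hi with hi | hi <;> rcases hj with hj | hj
    · simpa only [hi, hj, if_true] using hsep₁ hi hj hij
    · simp only [hi, hnA j hj, if_true, if_false]
      exact Or.inr (Or.inr (Or.inl (by linarith [(hbox₁ i hi).2.2.2.2.2, (hbox₂ j hj).2.2.2.2.1])))
    · simp only [hnA i hi, hj, if_true, if_false]
      exact Or.inr (Or.inr (Or.inr (by linarith [(hbox₁ j hj).2.2.2.2.2, (hbox₂ i hi).2.2.2.2.1])))
    · simpa only [hnA i hi, hnA j hj, if_false, intervalsApart_add_const] using hsep₂ hi hj hij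

theorem union_depth [DecidableEq ι] {D₁ D₂ : ℝ} (hAB : Disjoint A B)
    (hA : BoxPacking A w d h W D₁ H) (hB : BoxPacking B w d h W D₂ H) :
    BoxPacking (A ∪ B) w d h W (D₁ + D₂) H :=
  (hA.swap_depth_height.union_height hAB hB.swap_depth_height).swap_depth_height

theorem union_width [DecidableEq ι] {W₁ W₂ : ℝ} (hAB : Disjoint A B)
    (hA : BoxPacking A w d h W₁ D H) (hB : BoxPacking B w d h W₂ D H) :
    BoxPacking (A ∪ B) w d h (W₁ + W₂) D H :=
  (hA.swap_width_depth.union_depth hAB hB.swap_width_depth).swap_width_depth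

theorem row (hw : ∀ i ∈ S, 0 ≤ w i) (hd : ∀ i ∈ S, d i ≤ D) (hh : ∀ i ∈ S, h i ≤ H)
    (hD : 0 ≤ D) (hH : 0 ≤ H) : BoxPacking S w d h (∑ i ∈ S, w i) D H := by
  classical
  induction S using Finset.induction_on with
  | empty => exact ⟨le_of_eq sum_empty.symm, hD, hH, 0, 0, 0, by simp, by simp⟩
  | insert a S ha ih =>
    have hsingle : BoxPacking {a} w d h (w a) D H :=
      ⟨hw a (mem_insert_self a S), hD, hH, 0, 0, 0,
        by simp [hd a (mem_insert_self a S), hh a (mem_insert_self a S)], by simp⟩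
    rw [sum_insert ha, insert_eq]
    exact hsingle.union_width (disjoint_singleton_left.2 ha)
      (ih (fun i hi => hw i (mem_insert_of_mem hi)) (fun i hi => hd i (mem_insert_of_mem hi))
        (fun i hi => hh i (mem_insert_of_mem hi)))

variable {hmax : ℝ}

/-- Greedy shelf packing by decreasing height: each closed level has `b`-weight at least `1 / k`,
which pays for the height of the next level. -/
theorem of_levels (μ b : ι → ℝ) {c k : ℝ} (hc : 0 ≤ c) (hk : 0 ≤ k) (hmax0 : 0 ≤ hmax)
    (hb : ∀ i ∈ S, 0 ≤ b i) (hh : ∀ i ∈ S, 0 ≤ h i ∧ h i ≤ hmax)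
    (hlevel : ∀ A ⊆ S, ∑ i ∈ A, μ i ≤ c → ∀ H, 0 ≤ H → (∀ i ∈ A, h i ≤ H) →
      BoxPacking A w d h W D H)
    (hfull : ∀ P ⊆ S, ∀ a ∈ S, c < ∑ i ∈ P, μ i + μ a → 1 ≤ k * ∑ i ∈ P, b i) :
    BoxPacking S w d h W D (hmax + k * ∑ i ∈ S, b i * h i) := by
  classical
  induction S using Finset.strongInduction generalizing hmax with
  | H S ih =>
  by_cases hS : ∑ i ∈ S, μ i ≤ c
  · refine (hlevel S Subset.rfl hS hmax hmax0 fun i hi => (hh i hi).2).mono le_rfl le_rfl ?_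
    exact le_add_of_nonneg_right <| mul_nonneg hk <|
      sum_nonneg fun i hi => mul_nonneg (hb i hi) (hh i hi).1
  obtain ⟨P, hPS, a, ha, hPc, hcP, hPa, haR⟩ := exists_greedy_split h μ hc S (not_le.1 hS)
  have haS : a ∈ S := (mem_sdiff.1 ha).1
  have hPfull := hfull P hPS a haS hcP
  have hPne : P.Nonempty := nonempty_iff_ne_empty.2 fun hP => by norm_num [hP] at hPfull
  have hR : BoxPacking (S \ P) w d h W D (h a + k * ∑ i ∈ S \ P, b i * h i) :=
    ih _ (sdiff_ssubset hPS hPne) (hh a haS).1 (fun i hi => hb i (sdiff_subset hi))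
      (fun i hi => ⟨(hh i (sdiff_subset hi)).1, haR i hi⟩)
      (fun A hA => hlevel A (hA.trans sdiff_subset))
      (fun P' hP' a' ha' => hfull P' (hP'.trans sdiff_subset) a' (sdiff_subset ha'))
  have hstack := (hlevel P hPS hPc hmax hmax0 fun i hi => (hh i (hPS hi)).2).union_height
    disjoint_sdiff hR
  rw [union_sdiff_of_subset hPS] at hstack
  refine hstack.mono le_rfl le_rfl ?_
  have hcharge : h a ≤ k * ∑ i ∈ P, b i * h i := calc
    h a ≤ (k * ∑ i ∈ P, b i) * h a := le_mul_of_one_le_left (hh a haS).1 hPfull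
    _ = k * ∑ i ∈ P, b i * h a := by rw [mul_assoc, sum_mul]
    _ ≤ k * ∑ i ∈ P, b i * h i := by
      gcongr with i hi
      exacts [hb i (hPS hi), hPa i hi]
  rw [← sum_sdiff hPS]
  linarith

theorem rows (n : ℕ) (hw : ∀ i ∈ S, 0 ≤ w i ∧ w i ≤ 1 / 2) (hd : ∀ i ∈ S, d i ≤ D)
    (hh : ∀ i ∈ S, h i ≤ H) (hD : 0 ≤ D) (hH : 0 ≤ H) (hsum : ∑ i ∈ S, w i ≤ (n + 2) / 2) :
    BoxPacking S w d h 1 ((n + 1) * D) H := by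
  classical
  induction n generalizing S with
  | zero =>
    refine (row (fun i hi => (hw i hi).1) hd hh hD hH).mono ?_ (by simp) le_rfl
    simpa using hsum
  | succ n ih =>
    by_cases hS : ∑ i ∈ S, w i ≤ 1
    · exact (row (fun i hi => (hw i hi).1) hd hh hD hH).mono hS
        (le_mul_of_one_le_left hD (by simp; positivity)) le_rfl
    obtain ⟨P, hPS, a, ha, hP1, h1P, -, -⟩ := exists_greedy_split w w zero_le_one S (not_le.1 hS)
    have hfirst : BoxPacking P w d h 1 D H :=
      (row (fun i hi => (hw i (hPS hi)).1) (fun i hi => hd i (hPS hi)) (fun i hi => hh i (hPS hi))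
        hD hH).mono hP1 le_rfl le_rfl
    have hrest : BoxPacking (S \ P) w d h 1 ((n + 1) * D) H := by
      refine ih (fun i hi => hw i (sdiff_subset hi)) (fun i hi => hd i (sdiff_subset hi))
        (fun i hi => hh i (sdiff_subset hi)) ?_
      rw [← sum_sdiff hPS] at hsum
      push_cast at hsum
      linarith [(hw a (mem_sdiff.1 ha).1).2]
    have hstack := hfirst.union_depth disjoint_sdiff hrest
    rw [union_sdiff_of_subset hPS] at hstack
    convert hstack using 2
    push_cast
    ring

/-- Levels are `n + 1` rows; a closed level holds more than `(n + 2) / 2 - ω` of width in items of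
depth at least `δ`, hence area at least `1 / 3` by `hωδ`. -/
theorem of_rows_class (n : ℕ) {ω δ : ℝ} (hω : ω ≤ 1 / 2)
    (hωδ : 1 / 3 ≤ ((n + 2) / 2 - ω) * δ) (hmax0 : 0 ≤ hmax) (hw : ∀ i ∈ S, 0 ≤ w i ∧ w i ≤ ω)
    (hd : ∀ i ∈ S, δ ≤ d i ∧ d i ≤ 1 / (n + 1)) (hh : ∀ i ∈ S, 0 ≤ h i ∧ h i ≤ hmax) :
    BoxPacking S w d h 1 1 (hmax + 3 * ∑ i ∈ S, w i * d i * h i) := by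
  have hcap : 1 / 2 ≤ ((n : ℝ) + 2) / 2 - ω := by linarith [n.cast_nonneg (α := ℝ)]
  have hδ : 0 < δ := pos_of_mul_pos_right (a := ((n : ℝ) + 2) / 2 - ω) (by linarith) (by linarith)
  have hn : (0 : ℝ) < n + 1 := by positivity
  refine of_levels w (fun i => w i * d i) (c := (n + 2) / 2) (by positivity) zero_le_three hmax0
    (fun i hi => mul_nonneg (hw i hi).1 (hδ.le.trans (hd i hi).1)) hh ?_ ?_
  · intro A hA hAc H hH hAh
    have hA := rows n (fun i hi => ⟨(hw i (hA hi)).1, (hw i (hA hi)).2.trans hω⟩)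
      (fun i hi => (hd i (hA hi)).2) hAh (by positivity) hH hAc
    rwa [mul_one_div_cancel hn.ne'] at hA
  · intro P hP a ha hcP
    calc 1 ≤ 3 * ((((n : ℝ) + 2) / 2 - ω) * δ) := by linarith
      _ ≤ 3 * ((∑ i ∈ P, w i) * δ) := by gcongr; linarith [(hw a ha).2]
      _ = 3 * ∑ i ∈ P, w i * δ := by rw [sum_mul]
      _ ≤ 3 * ∑ i ∈ P, w i * d i := by
        gcongr with i hi
        exacts [(hw i (hP hi)).1, (hd i (hP hi)).1]

theorem of_pairs_class (hmax0 : 0 ≤ hmax) (hw : ∀ i ∈ S, 1 / 3 ≤ w i ∧ w i ≤ 1 / 2)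
    (hd : ∀ i ∈ S, 1 / 2 ≤ d i ∧ d i ≤ 1) (hh : ∀ i ∈ S, 0 ≤ h i ∧ h i ≤ hmax) :
    BoxPacking S w d h 1 1 (hmax + 3 * ∑ i ∈ S, w i * d i * h i) := by
  have harea : ∀ i ∈ S, 1 / 6 ≤ w i * d i := fun i hi => by nlinarith [hw i hi, hd i hi]
  refine of_levels w (fun i => w i * d i) zero_le_one zero_le_three hmax0
    (fun i hi => (harea i hi).trans' (by norm_num)) hh ?_ ?_
  · intro A hA hA1 H hH hAh
    exact (row (fun i hi => by linarith [hw i (hA hi)]) (fun i hi => (hd i (hA hi)).2) hAh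
      zero_le_one hH).mono hA1 le_rfl le_rfl
  · intro P hP a ha hcP
    -- more than half the width is filled by items of width at most `1/2`, so by two of them
    have hcard : (2 : ℝ) ≤ #P := by
      have hsum := sum_le_card_nsmul P w (1 / 2) fun i hi => (hw i (hP hi)).2
      rw [nsmul_eq_mul] at hsum
      have : (1 : ℕ) < #P := by exact_mod_cast (by linarith [(hw a ha).2] : (1 : ℝ) < #P)
      exact_mod_cast this
    have hsum := card_nsmul_le_sum P (fun i => w i * d i) (1 / 6) fun i hi => harea i (hP hi)
    rw [nsmul_eq_mul] at hsum
    linarith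

/-- Next-fit decreasing depth: the levels of `of_levels` are now rows stacked along the depth. -/
theorem nfdh {dmax : ℝ} (hdmax : 0 ≤ dmax) (hH : 0 ≤ H) (hw : ∀ i ∈ S, 0 ≤ w i ∧ w i ≤ 1 / 2)
    (hd : ∀ i ∈ S, 0 ≤ d i ∧ d i ≤ dmax) (hh : ∀ i ∈ S, h i ≤ H) :
    BoxPacking S w d h 1 (dmax + 2 * ∑ i ∈ S, w i * d i) H := by
  refine swap_depth_height (of_levels (d := h) (h := d) w w zero_le_one zero_le_two hdmax
    (fun i hi => (hw i hi).1) hd ?_ ?_)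
  · intro A hA hA1 D' hD' hAd
    exact (row (fun i hi => (hw i (hA hi)).1) (fun i hi => hh i (hA hi)) hAd hH hD').mono hA1
      le_rfl le_rfl
  · intro P hP a ha hcP
    linarith [(hw a ha).2]

theorem of_small_class (hmax0 : 0 ≤ hmax) (hw : ∀ i ∈ S, 0 ≤ w i ∧ w i ≤ 1 / 2)
    (hd : ∀ i ∈ S, 0 ≤ d i ∧ d i ≤ 1 / 6) (hh : ∀ i ∈ S, 0 ≤ h i ∧ h i ≤ hmax) :
    BoxPacking S w d h 1 1 (hmax + 3 * ∑ i ∈ S, w i * d i * h i) := by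
  have harea : ∀ i ∈ S, 0 ≤ w i * d i ∧ w i * d i ≤ 1 / 12 := fun i hi =>
    ⟨mul_nonneg (hw i hi).1 (hd i hi).1, by nlinarith [hw i hi, hd i hi]⟩
  refine of_levels (fun i => w i * d i) (fun i => w i * d i) (c := 5 / 12) (by norm_num)
    zero_le_three hmax0 (fun i hi => (harea i hi).1) hh ?_ ?_
  · intro A hA hA5 H hH hAh
    exact (nfdh (by norm_num) hH (fun i hi => hw i (hA hi)) (fun i hi => hd i (hA hi)) hAh).mono
      le_rfl (by linarith) le_rfl
  · intro P hP a ha hcP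
    linarith [(harea a ha).2]

theorem of_split (p : ι → Prop) (f : ι → ℝ) {c₁ c₂ k : ℝ}
    (hp : ∀ A ⊆ S, (∀ i ∈ A, p i) → BoxPacking A w d h W D (c₁ + k * ∑ i ∈ A, f i))
    (hnp : ∀ A ⊆ S, (∀ i ∈ A, ¬p i) → BoxPacking A w d h W D (c₂ + k * ∑ i ∈ A, f i)) :
    BoxPacking S w d h W D (c₁ + c₂ + k * ∑ i ∈ S, f i) := by
  classical
  have hS := (hp _ (filter_subset p S) fun i hi => (mem_filter.1 hi).2).union_height
    (disjoint_filter_filter_not S S p)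
    (hnp _ (filter_subset _ S) fun i hi => (mem_filter.1 hi).2)
  rw [filter_union_filter_not_eq] at hS
  rw [← sum_filter_add_sum_filter_not S p f]
  convert hS using 1
  ring

theorem of_narrow_deep (hmax0 : 0 ≤ hmax) (hw : ∀ i ∈ S, 0 ≤ w i ∧ w i ≤ 1 / 2)
    (hd : ∀ i ∈ S, 1 / 2 ≤ d i ∧ d i ≤ 1) (hh : ∀ i ∈ S, 0 ≤ h i ∧ h i ≤ hmax) :
    BoxPacking S w d h 1 1 (2 * hmax + 3 * ∑ i ∈ S, w i * d i * h i) := by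
  rw [two_mul]
  refine of_split (fun i => w i ≤ 1 / 3) _ (fun A hA hwA => ?_) (fun A hA hwA => ?_)
  · refine of_rows_class 0 (ω := 1 / 3) (δ := 1 / 2) (by norm_num) (by norm_num) hmax0
      (fun i hi => ⟨(hw i (hA hi)).1, hwA i hi⟩) (fun i hi => ?_) (fun i hi => hh i (hA hi))
    simpa using hd i (hA hi)
  · exact of_pairs_class hmax0 (fun i hi => ⟨(not_le.1 (hwA i hi)).le, (hw i (hA hi)).2⟩)
      (fun i hi => hd i (hA hi)) (fun i hi => hh i (hA hi))

theorem of_narrow_depth_le_quarter (hmax0 : 0 ≤ hmax) (hw : ∀ i ∈ S, 0 ≤ w i ∧ w i ≤ 1 / 2)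
    (hd : ∀ i ∈ S, 0 ≤ d i ∧ d i ≤ 1 / 4) (hh : ∀ i ∈ S, 0 ≤ h i ∧ h i ≤ hmax) :
    BoxPacking S w d h 1 1 (2 * hmax + 3 * ∑ i ∈ S, w i * d i * h i) := by
  rw [two_mul]
  refine of_split (fun i => 1 / 6 < d i) _ (fun A hA hdA => ?_) (fun A hA hdA => ?_)
  · refine of_rows_class 3 (ω := 1 / 2) (δ := 1 / 6) le_rfl (by norm_num) hmax0
      (fun i hi => hw i (hA hi)) (fun i hi => ⟨(hdA i hi).le, ?_⟩) (fun i hi => hh i (hA hi))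
    norm_num [(hd i (hA hi)).2]
  · exact of_small_class hmax0 (fun i hi => hw i (hA hi))
      (fun i hi => ⟨(hd i (hA hi)).1, not_lt.1 (hdA i hi)⟩) (fun i hi => hh i (hA hi))

theorem of_narrow_depth_le_third (hmax0 : 0 ≤ hmax) (hw : ∀ i ∈ S, 0 ≤ w i ∧ w i ≤ 1 / 2)
    (hd : ∀ i ∈ S, 0 ≤ d i ∧ d i ≤ 1 / 3) (hh : ∀ i ∈ S, 0 ≤ h i ∧ h i ≤ hmax) :
    BoxPacking S w d h 1 1 (3 * hmax + 3 * ∑ i ∈ S, w i * d i * h i) := by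
  rw [show 3 * hmax = hmax + 2 * hmax by ring]
  refine of_split (fun i => 1 / 4 < d i) _ (fun A hA hdA => ?_) (fun A hA hdA => ?_)
  · refine of_rows_class 2 (ω := 1 / 2) (δ := 1 / 4) le_rfl (by norm_num) hmax0
      (fun i hi => hw i (hA hi)) (fun i hi => ⟨(hdA i hi).le, ?_⟩) (fun i hi => hh i (hA hi))
    norm_num [(hd i (hA hi)).2]
  · exact of_narrow_depth_le_quarter hmax0 (fun i hi => hw i (hA hi))
      (fun i hi => ⟨(hd i (hA hi)).1, not_lt.1 (hdA i hi)⟩) (fun i hi => hh i (hA hi))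

theorem of_narrow_shallow (hmax0 : 0 ≤ hmax) (hw : ∀ i ∈ S, 0 ≤ w i ∧ w i ≤ 1 / 2)
    (hd : ∀ i ∈ S, 0 ≤ d i ∧ d i ≤ 1 / 2) (hh : ∀ i ∈ S, 0 ≤ h i ∧ h i ≤ hmax) :
    BoxPacking S w d h 1 1 (4 * hmax + 3 * ∑ i ∈ S, w i * d i * h i) := by
  rw [show 4 * hmax = hmax + 3 * hmax by ring]
  refine of_split (fun i => 1 / 3 < d i) _ (fun A hA hdA => ?_) (fun A hA hdA => ?_)
  · refine of_rows_class 1 (ω := 1 / 2) (δ := 1 / 3) le_rfl (by norm_num) hmax0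
      (fun i hi => hw i (hA hi)) (fun i hi => ⟨(hdA i hi).le, ?_⟩) (fun i hi => hh i (hA hi))
    norm_num [(hd i (hA hi)).2]
  · exact of_narrow_depth_le_third hmax0 (fun i hi => hw i (hA hi))
      (fun i hi => ⟨(hd i (hA hi)).1, not_lt.1 (hdA i hi)⟩) (fun i hi => hh i (hA hi))

theorem of_narrow (hmax0 : 0 ≤ hmax) (hw : ∀ i ∈ S, 0 ≤ w i ∧ w i ≤ 1 / 2)
    (hd : ∀ i ∈ S, 0 ≤ d i ∧ d i ≤ 1) (hh : ∀ i ∈ S, 0 ≤ h i ∧ h i ≤ hmax) :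
    BoxPacking S w d h 1 1 (6 * hmax + 3 * ∑ i ∈ S, w i * d i * h i) := by
  rw [show 6 * hmax = 2 * hmax + 4 * hmax by ring]
  refine of_split (fun i => 1 / 2 < d i) _ (fun A hA hdA => ?_) (fun A hA hdA => ?_)
  · exact of_narrow_deep hmax0 (fun i hi => hw i (hA hi))
      (fun i hi => ⟨(hdA i hi).le, (hd i (hA hi)).2⟩) (fun i hi => hh i (hA hi))
  · exact of_narrow_shallow hmax0 (fun i hi => hw i (hA hi))
      (fun i hi => ⟨(hd i (hA hi)).1, not_lt.1 (hdA i hi)⟩) (fun i hi => hh i (hA hi))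

theorem of_wide (hmax0 : 0 ≤ hmax) (hw : ∀ i ∈ S, 1 / 2 ≤ w i ∧ w i ≤ 1)
    (hd : ∀ i ∈ S, 0 ≤ d i ∧ d i ≤ 1 / 2) (hh : ∀ i ∈ S, 0 ≤ h i ∧ h i ≤ hmax) :
    BoxPacking S w d h 1 1 (2 * hmax + 3 * ∑ i ∈ S, w i * d i * h i) := by
  simpa only [mul_comm (d _) (w _)] using (of_narrow_deep hmax0 hd hw hh).swap_width_depth

end BoxPacking

end

theorem stmt1_general {ι : Type*} (T : Finset ι) (w d h : ι → ℝ) (hmax : ℝ)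
    (hmax_pos : 0 < hmax)
    (hdims : ∀ i ∈ T, 0 < w i ∧ w i ≤ 1 ∧ 0 < d i ∧ d i ≤ 1 ∧
      0 < h i ∧ h i ≤ hmax)
    (hwd : ∀ i ∈ T, w i ≤ 1 / 2 ∨ d i ≤ 1 / 2) :
    CanPack T w d h 1 1 (3 * (∑ i ∈ T, w i * d i * h i) + 8 * hmax) := by
  have hh : ∀ i ∈ T, 0 ≤ h i ∧ h i ≤ hmax := fun i hi =>
    ⟨(hdims i hi).2.2.2.2.1.le, (hdims i hi).2.2.2.2.2⟩
  have hT : BoxPacking T w d h 1 1 (6 * hmax + 2 * hmax + 3 * ∑ i ∈ T, w i * d i * h i) := by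
    refine BoxPacking.of_split (fun i => w i ≤ 1 / 2) _ (fun A hA hwA => ?_) (fun A hA hwA => ?_)
    · exact BoxPacking.of_narrow hmax_pos.le
        (fun i hi => ⟨(hdims i (hA hi)).1.le, hwA i hi⟩)
        (fun i hi => ⟨(hdims i (hA hi)).2.2.1.le, (hdims i (hA hi)).2.2.2.1⟩)
        (fun i hi => hh i (hA hi))
    · exact BoxPacking.of_wide hmax_pos.le
        (fun i hi => ⟨(not_le.1 (hwA i hi)).le, (hdims i (hA hi)).2.1⟩)
        (fun i hi => ⟨(hdims i (hA hi)).2.2.1.le, (hwd i (hA hi)).resolve_left (hwA i hi)⟩)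
        (fun i hi => hh i (hA hi))
  exact (hT.mono le_rfl le_rfl (by linarith)).canPack

/-- Any finite set `T` of 3D items with widths and depths in
`(0,1]`, heights in `(0, hmax]`, such that every item has width at most `1/2`
or depth at most `1/2`, can be packed into the strip
`[0,1] × [0,1] × [0, 3·v(T) + 8·hmax]`. -/
theorem stmt1 {ι : Type*} (T : Finset ι) (w d h : ι → ℝ) (hmax : ℝ)
    (hmax_pos : 0 < hmax) (hmax_le : hmax ≤ 1)
    (hdims : ∀ i ∈ T, 0 < w i ∧ w i ≤ 1 ∧ 0 < d i ∧ d i ≤ 1 ∧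
      0 < h i ∧ h i ≤ hmax)
    (hwd : ∀ i ∈ T, w i ≤ 1 / 2 ∨ d i ≤ 1 / 2) :
    CanPack T w d h 1 1 (3 * (∑ i ∈ T, w i * d i * h i) + 8 * hmax) :=
  stmt1_general T w d h hmax hmax_pos hdims hwd
end

section
/- Let I be a finite set of 3D items with all dimensions in (0,1] and total volume v(I) ≤ K, for some real K ≥ 1, and let δ ∈ (0,1]. Define μ_0 = δ and μ_j = μ_{j−1}^4 for j ≥ 1, and let N = ⌈3K/δ⌉. Then there exists an index j ∈ {1,…,N} such that the total volume of the items of I that have at least one of their three dimensions in the interval (μ_j, μ_{j−1}] is at most δ. -/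
/-!
Since `μ` is decreasing, the intervals `(μ j, μ (j - 1)]` are pairwise disjoint, so each item
has a dimension in at most three of them. Summing the volumes counted for `j = 1, …, N` therefore
gives at most `3 K ≤ N δ`, and by averaging some `j` contributes at most `δ`.
-/

open scoped Classical

open Finset

theorem antitone_of_succ_eq_pow {R : Type*} [Semiring R] [PartialOrder R] [IsOrderedRing R]
    {μ : ℕ → R} {n : ℕ} (hn : n ≠ 0) (h0 : 0 ≤ μ 0) (h1 : μ 0 ≤ 1)
    (hμ : ∀ j, μ (j + 1) = μ j ^ n) : Antitone μ := by
  have hbound : ∀ j, 0 ≤ μ j ∧ μ j ≤ 1 := by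
    intro j
    induction j with
    | zero => exact ⟨h0, h1⟩
    | succ j ih => rw [hμ]; exact ⟨pow_nonneg ih.1 n, pow_le_one₀ ih.1 ih.2⟩
  refine antitone_nat_of_succ_le fun j => ?_
  rw [hμ]
  exact pow_le_of_le_one (hbound j).1 (hbound j).2 hn

theorem card_filter_mem_Ioc_pred_le_one {α : Type*} [Preorder α] {μ : ℕ → α}
    (hμ : Antitone μ) (s : Finset ℕ) (x : α) :
    #{j ∈ s | μ j < x ∧ x ≤ μ (j - 1)} ≤ 1 := by
  refine card_le_one.mpr fun a ha b hb => ?_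
  simp only [mem_filter] at ha hb
  by_contra hne
  wlog hab : a < b generalizing a b
  · exact this b a hb ha (Ne.symm hne) (lt_of_le_of_ne (not_lt.mp hab) (Ne.symm hne))
  exact lt_irrefl x ((hb.2.2.trans (hμ (Nat.le_sub_one_of_lt hab))).trans_lt ha.2.1)

theorem card_filter_mem_Ioc_pred_or_le_three {α : Type*} [Preorder α] {μ : ℕ → α}
    (hμ : Antitone μ) (s : Finset ℕ) (x y z : α) :
    #{j ∈ s | (μ j < x ∧ x ≤ μ (j - 1)) ∨ (μ j < y ∧ y ≤ μ (j - 1)) ∨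
      (μ j < z ∧ z ≤ μ (j - 1))} ≤ 3 := by
  rw [filter_or, filter_or]
  calc _ ≤ #{j ∈ s | μ j < x ∧ x ≤ μ (j - 1)} +
        (#{j ∈ s | μ j < y ∧ y ≤ μ (j - 1)} + #{j ∈ s | μ j < z ∧ z ≤ μ (j - 1)}) :=
        (card_union_le _ _).trans (add_le_add le_rfl (card_union_le _ _))
    _ ≤ 1 + (1 + 1) := by
        gcongr <;> exact card_filter_mem_Ioc_pred_le_one hμ s _

theorem sum_sum_filter_le_mul_sum {ι κ R : Type*} [CommSemiring R] [PartialOrder R]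
    [IsOrderedRing R] (I : Finset ι) (J : Finset κ) (P : κ → ι → Prop) [DecidableRel P]
    (v : ι → R) (hv : ∀ i ∈ I, 0 ≤ v i) (m : ℕ) (hm : ∀ i ∈ I, #{j ∈ J | P j i} ≤ m) :
    ∑ j ∈ J, ∑ i ∈ I with P j i, v i ≤ m * ∑ i ∈ I, v i := by
  calc ∑ j ∈ J, ∑ i ∈ I with P j i, v i
      = ∑ i ∈ I, ∑ j ∈ J, if P j i then v i else 0 := by
        simp_rw [sum_filter]; exact sum_comm
    _ = ∑ i ∈ I, #{j ∈ J | P j i} * v i := by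
        refine sum_congr rfl fun i _ => ?_
        rw [← sum_filter, sum_const, nsmul_eq_mul]
    _ ≤ ∑ i ∈ I, m * v i := sum_le_sum fun i hi => by gcongr; exacts [hv i hi, hm i hi]
    _ = m * ∑ i ∈ I, v i := (mul_sum _ _ _).symm

/-- Shifting argument: if the items of `I` have all dimensions
in `(0,1]` and total volume at most `K` (with `K ≥ 1`), `δ ∈ (0,1]`,
`μ₀ = δ`, `μⱼ = μ_{j-1}⁴`, and `N = ⌈3K/δ⌉`, then for some `j ∈ {1,…,N}` the
total volume of the items with at least one dimension in `(μⱼ, μ_{j-1}]` is at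
most `δ`. -/
theorem stmt2 {ι : Type*} (I : Finset ι) (w d h : ι → ℝ) (K δ : ℝ)
    (hK : 1 ≤ K) (hδpos : 0 < δ) (hδle : δ ≤ 1)
    (hdims : ∀ i ∈ I, 0 < w i ∧ w i ≤ 1 ∧ 0 < d i ∧ d i ≤ 1 ∧
      0 < h i ∧ h i ≤ 1)
    (hvol : ∑ i ∈ I, w i * d i * h i ≤ K)
    (μ : ℕ → ℝ) (hμ0 : μ 0 = δ) (hμ : ∀ j, μ (j + 1) = (μ j) ^ 4) :
    ∃ j ∈ Finset.Icc 1 ⌈3 * K / δ⌉₊,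
      ∑ i ∈ I.filter (fun i =>
          (μ j < w i ∧ w i ≤ μ (j - 1)) ∨ (μ j < d i ∧ d i ≤ μ (j - 1)) ∨
          (μ j < h i ∧ h i ≤ μ (j - 1))),
        w i * d i * h i ≤ δ := by
  have hanti : Antitone μ :=
    antitone_of_succ_eq_pow four_ne_zero (hμ0 ▸ hδpos.le) (hμ0 ▸ hδle) hμ
  have hv : ∀ i ∈ I, 0 ≤ w i * d i * h i := fun i hi => by
    obtain ⟨hw, -, hd, -, hh, -⟩ := hdims i hi
    positivity
  refine exists_le_of_sum_le (nonempty_Icc.mpr (Nat.one_le_ceil_iff.mpr (by positivity))) ?_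
  calc _ ≤ (3 : ℕ) * ∑ i ∈ I, w i * d i * h i :=
        sum_sum_filter_le_mul_sum I _ _ _ hv 3 fun i _ =>
          card_filter_mem_Ioc_pred_or_le_three hanti _ (w i) (d i) (h i)
    _ ≤ 3 * K / δ * δ := by
        rw [div_mul_cancel₀ _ hδpos.ne']
        push_cast
        gcongr
    _ ≤ ⌈3 * K / δ⌉₊ * δ := by gcongr; exact Nat.le_ceil _
    _ = ∑ j ∈ Icc 1 ⌈3 * K / δ⌉₊, δ := by simp
end

section
/- Let μ ∈ (0,1/2], let L be a finite set of 3D items each of whose width, depth and height all exceed μ, and let S be a finite set of 3D items each of height at most μ^4, all dimensions lying in (0,1]. Suppose L ∪ S can be packed into the unit cube [0,1]^3. Then there exists a subset S' ⊆ S with v(S∖S') ≤ 2μ and a packing of L ∪ S' into [0,1]^3 in which, for every item ℓ ∈ L, the z-coordinate z_ℓ of ℓ equals a·μ^4 + Σ_{j∈F} h_j for some nonnegative integer a and some subset F ⊆ L∖{ℓ} with |F| ≤ ⌊1/μ⌋. -/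
/-!
Each large item `ℓ` is lowered to `snapDown (z ℓ)`: the largest number not exceeding `z ℓ`
of the form `a * μ ^ 4 + ∑ j ∈ F, h j`, where `F` ranges over large items lying entirely below
height `z ℓ`. It moves down by less than `μ ^ 4`. If a large item `j` lies below `ℓ`, then
`snapDown (z j) + h j` is again such a number, so `j` stays below `ℓ` and the lowered large
items still form a packing.

A small item that meets a lowered `ℓ` lies within `μ ^ 4` of its new bottom, so the small items
discarded because of `ℓ` fit into a slab of volume `2 μ ^ 4`. Since there are at most `μ⁻³`
large items, the discarded volume is at most `2 μ`. Finally, `∑ j ∈ F, h j ≤ 1` with every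
`h j > μ` gives `|F| ≤ ⌊1 / μ⌋`.
-/

open MeasureTheory Set

section Geometry

lemma itemRegion_subset_itemRegion {w d h x y z w' d' h' x' y' z' : ℝ}
    (hx : x' ≤ x) (hxw : x + w ≤ x' + w') (hy : y' ≤ y) (hyd : y + d ≤ y' + d')
    (hz : z' ≤ z) (hzh : z + h ≤ z' + h') :
    ItemRegion w d h x y z ⊆ ItemRegion w' d' h' x' y' z' :=
  prod_mono (Ioo_subset_Ioo hx hxw) (prod_mono (Ioo_subset_Ioo hy hyd) (Ioo_subset_Ioo hz hzh))

lemma disjoint_itemRegion_iff {w d h x y z w' d' h' x' y' z' : ℝ} :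
    Disjoint (ItemRegion w d h x y z) (ItemRegion w' d' h' x' y' z') ↔
      Disjoint (Ioo x (x + w)) (Ioo x' (x' + w')) ∨ Disjoint (Ioo y (y + d)) (Ioo y' (y' + d')) ∨
        Disjoint (Ioo z (z + h)) (Ioo z' (z' + h')) := by
  simp only [ItemRegion, disjoint_prod]

lemma disjoint_Ioo_add_iff {a b u v : ℝ} (hu : 0 < u) (hv : 0 < v) :
    Disjoint (Ioo a (a + u)) (Ioo b (b + v)) ↔ a + u ≤ b ∨ b + v ≤ a := by
  rw [Ioo_disjoint_Ioo, min_le_iff, le_max_iff, le_max_iff]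
  constructor
  · rintro ((h | h) | (h | h))
    · linarith
    · exact Or.inl h
    · exact Or.inr h
    · linarith
  · rintro (h | h) <;> simp [h]

lemma volume_itemRegion {w d h x y z : ℝ} (hw : 0 ≤ w) (hd : 0 ≤ d) :
    volume (ItemRegion w d h x y z) = ENNReal.ofReal (w * d * h) := by
  simp only [ItemRegion, Measure.volume_eq_prod, Measure.prod_prod, Real.volume_Ioo,
    add_sub_cancel_left, mul_assoc, ENNReal.ofReal_mul hw, ENNReal.ofReal_mul hd]

lemma sum_volume_le_of_subset_itemRegion {ι : Type*} {T : Finset ι} {w d h x y z : ι → ℝ}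
    {W D H a b c : ℝ} (hdims : ∀ i ∈ T, 0 ≤ w i ∧ 0 ≤ d i ∧ 0 ≤ h i) (hW : 0 ≤ W) (hD : 0 ≤ D)
    (hH : 0 ≤ H)
    (hsub : ∀ i ∈ T, ItemRegion (w i) (d i) (h i) (x i) (y i) (z i) ⊆ ItemRegion W D H a b c)
    (hdisj : (T : Set ι).PairwiseDisjoint
      fun i => ItemRegion (w i) (d i) (h i) (x i) (y i) (z i)) :
    ∑ i ∈ T, w i * d i * h i ≤ W * D * H := by
  have hvol : ENNReal.ofReal (∑ i ∈ T, w i * d i * h i) ≤ ENNReal.ofReal (W * D * H) := by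
    rw [ENNReal.ofReal_sum_of_nonneg fun i hi => by
      obtain ⟨hw, hd, hh⟩ := hdims i hi; positivity, ← volume_itemRegion hW hD]
    calc ∑ i ∈ T, ENNReal.ofReal (w i * d i * h i)
        = ∑ i ∈ T, volume (ItemRegion (w i) (d i) (h i) (x i) (y i) (z i)) :=
          Finset.sum_congr rfl fun i hi => (volume_itemRegion (hdims i hi).1 (hdims i hi).2.1).symm
      _ = volume (⋃ i ∈ T, ItemRegion (w i) (d i) (h i) (x i) (y i) (z i)) :=
          (measure_biUnion_finset hdisj fun i _ =>
            measurableSet_Ioo.prod (measurableSet_Ioo.prod measurableSet_Ioo)).symm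
      _ ≤ volume (ItemRegion W D H a b c) := measure_mono (iUnion₂_subset hsub)
  exact (ENNReal.ofReal_le_ofReal_iff (by positivity)).mp hvol

end Geometry

namespace IsPacking

variable {ι : Type*} {T : Finset ι} {w d h : ι → ℝ} {W D H : ℝ} {x y z : ι → ℝ}

lemma subset {T' : Finset ι} (hp : IsPacking T w d h W D H x y z) (hT' : T' ⊆ T) :
    IsPacking T' w d h W D H x y z :=
  ⟨fun i hi => hp.1 i (hT' hi), fun i hi j hj => hp.2 i (hT' hi) j (hT' hj)⟩

lemma sum_volume_le (hp : IsPacking T w d h W D H x y z)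
    (hdims : ∀ i ∈ T, 0 ≤ w i ∧ 0 ≤ d i ∧ 0 ≤ h i) (hW : 0 ≤ W) (hD : 0 ≤ D) (hH : 0 ≤ H) :
    ∑ i ∈ T, w i * d i * h i ≤ W * D * H := by
  refine sum_volume_le_of_subset_itemRegion (a := 0) (b := 0) (c := 0) hdims hW hD hH
    (fun i hi => ?_) fun i hi j hj => hp.2 i hi j hj
  obtain ⟨hx, hxw, hy, hyd, hz, hzh⟩ := hp.1 i hi
  exact itemRegion_subset_itemRegion hx (by simpa using hxw) hy (by simpa using hyd) hz
    (by simpa using hzh)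

lemma lower {z' : ι → ℝ} (hp : IsPacking T w d h W D H x y z) (hh : ∀ i ∈ T, 0 < h i)
    (hz'0 : ∀ i ∈ T, 0 ≤ z' i) (hz'z : ∀ i ∈ T, z' i ≤ z i)
    (hmono : ∀ i ∈ T, ∀ j ∈ T, z i + h i ≤ z j → z' i + h i ≤ z' j) :
    IsPacking T w d h W D H x y z' := by
  refine ⟨fun i hi => ?_, fun i hi j hj hij => ?_⟩
  · obtain ⟨hx, hxw, hy, hyd, -, hzh⟩ := hp.1 i hi
    exact ⟨hx, hxw, hy, hyd, hz'0 i hi, by linarith [hz'z i hi]⟩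
  · rw [disjoint_itemRegion_iff]
    rcases disjoint_itemRegion_iff.mp (hp.2 i hi j hj hij) with hx | hy | hz
    · exact Or.inl hx
    · exact Or.inr (Or.inl hy)
    · rw [disjoint_Ioo_add_iff (hh i hi) (hh j hj)] at hz ⊢
      exact Or.inr (Or.inr (hz.imp (hmono i hi j hj) (hmono j hj i hi)))

lemma union_ite [DecidableEq ι] {A B : Finset ι} {zA zB : ι → ℝ}
    (hA : IsPacking A w d h W D H x y zA) (hB : IsPacking B w d h W D H x y zB)
    (hAB : ∀ i ∈ A, ∀ j ∈ B, i ≠ j → Disjoint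
      (ItemRegion (w i) (d i) (h i) (x i) (y i) (zA i))
      (ItemRegion (w j) (d j) (h j) (x j) (y j) (zB j))) :
    IsPacking (A ∪ B) w d h W D H x y fun i => if i ∈ A then zA i else zB i := by
  refine ⟨fun i hi => ?_, fun i hi j hj hij => ?_⟩
  · by_cases hiA : i ∈ A
    · simpa [hiA] using hA.1 i hiA
    · simpa [hiA] using hB.1 i ((Finset.mem_union.mp hi).resolve_left hiA)
  · by_cases hiA : i ∈ A <;> by_cases hjA : j ∈ A <;> simp only [hiA, hjA, if_true, if_false]
    · exact hA.2 i hiA j hjA hij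
    · exact hAB i hiA j ((Finset.mem_union.mp hj).resolve_left hjA) hij
    · exact (hAB j hjA i ((Finset.mem_union.mp hi).resolve_left hiA) hij.symm).symm
    · exact hB.2 i ((Finset.mem_union.mp hi).resolve_left hiA) j
        ((Finset.mem_union.mp hj).resolve_left hjA) hij

end IsPacking

lemma Finset.sum_biUnion_le_sum_sum {ι α M : Type*} [DecidableEq α] [AddCommMonoid M]
    [PartialOrder M] [IsOrderedAddMonoid M] {s : Finset ι} {t : ι → Finset α} {f : α → M}
    (hf : ∀ a ∈ s.biUnion t, 0 ≤ f a) :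
    ∑ a ∈ s.biUnion t, f a ≤ ∑ i ∈ s, ∑ a ∈ t i, f a := by
  have himage : s.biUnion t = (s.sigma t).image Sigma.snd := by ext; simp
  calc ∑ a ∈ s.biUnion t, f a = ∑ a ∈ (s.sigma t).image Sigma.snd, f a := by rw [himage]
    _ ≤ ∑ p ∈ s.sigma t, f p.2 := Finset.sum_image_le_of_nonneg (by rwa [← himage])
    _ = ∑ i ∈ s, ∑ a ∈ t i, f a := Finset.sum_sigma s t fun p => f p.2

lemma Finset.card_le_floor_of_sum_le {ι : Type*} {F : Finset ι} {h : ι → ℝ} {μ : ℝ}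
    (hμ : 0 < μ) (hF : ∀ j ∈ F, μ ≤ h j) (hsum : ∑ j ∈ F, h j ≤ 1) : F.card ≤ ⌊1 / μ⌋₊ := by
  refine Nat.le_floor ?_
  rw [le_div_iff₀ hμ]
  calc (F.card : ℝ) * μ = ∑ _ ∈ F, μ := by rw [Finset.sum_const, nsmul_eq_mul]
    _ ≤ ∑ j ∈ F, h j := Finset.sum_le_sum hF
    _ ≤ 1 := hsum

section SnapDown

variable {ι : Type*} {L : Finset ι} {z h : ι → ℝ} {q t : ℝ}

def stackLevels (L : Finset ι) (z h : ι → ℝ) (q t : ℝ) : Set ℝ :=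
  {s | s ≤ t ∧ ∃ a : ℕ, ∃ F ⊆ L, (∀ j ∈ F, z j + h j ≤ t) ∧ s = a * q + ∑ j ∈ F, h j}

noncomputable def snapDown (L : Finset ι) (z h : ι → ℝ) (q t : ℝ) : ℝ :=
  sSup (stackLevels L z h q t)

lemma stackLevels_finite (hq : 0 < q) (hh : ∀ j ∈ L, 0 ≤ h j) :
    (stackLevels L z h q t).Finite := by
  refine (((Finset.range (⌊t / q⌋₊ + 1) ×ˢ L.powerset).image
    fun p => p.1 * q + ∑ j ∈ p.2, h j).finite_toSet).subset ?_
  rintro s ⟨hst, a, F, hFL, -, rfl⟩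
  have haq : a * q ≤ t := by
    linarith [Finset.sum_nonneg fun j hj => hh j (hFL hj)]
  have ha : a ≤ ⌊t / q⌋₊ := Nat.le_floor ((le_div_iff₀ hq).mpr haq)
  simp only [Finset.coe_image, Set.mem_image, Finset.mem_coe, Finset.mem_product,
    Finset.mem_range, Finset.mem_powerset, Prod.exists]
  exact ⟨a, F, ⟨by omega, hFL⟩, rfl⟩

lemma le_snapDown {s : ℝ} (hs : s ∈ stackLevels L z h q t) : s ≤ snapDown L z h q t :=
  le_csSup ⟨t, fun _ hs => hs.1⟩ hs

lemma zero_le_snapDown (ht : 0 ≤ t) : 0 ≤ snapDown L z h q t :=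
  le_snapDown ⟨ht, 0, ∅, Finset.empty_subset _, by simp, by simp⟩

lemma snapDown_mem (hq : 0 < q) (hh : ∀ j ∈ L, 0 ≤ h j) (ht : 0 ≤ t) :
    snapDown L z h q t ∈ stackLevels L z h q t :=
  Set.Nonempty.csSup_mem ⟨0, ht, 0, ∅, Finset.empty_subset _, by simp, by simp⟩
    (stackLevels_finite hq hh)

lemma snapDown_le (hq : 0 < q) (hh : ∀ j ∈ L, 0 ≤ h j) (ht : 0 ≤ t) :
    snapDown L z h q t ≤ t :=
  (snapDown_mem hq hh ht).1

lemma lt_snapDown_add (hq : 0 < q) (hh : ∀ j ∈ L, 0 ≤ h j) (ht : 0 ≤ t) :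
    t < snapDown L z h q t + q := by
  obtain ⟨-, a, F, hFL, hF, heq⟩ := snapDown_mem hq hh ht
  by_contra! hle
  have : snapDown L z h q t + q ≤ snapDown L z h q t :=
    le_snapDown ⟨hle, a + 1, F, hFL, hF, by rw [heq]; push_cast; ring⟩
  linarith

lemma snapDown_add_le_snapDown [DecidableEq ι] {j : ι} (hq : 0 < q) (hh : ∀ j ∈ L, 0 < h j)
    (hj : j ∈ L) (hzj : 0 ≤ z j) (hjt : z j + h j ≤ t) :
    snapDown L z h q (z j) + h j ≤ snapDown L z h q t := by
  obtain ⟨hle, a, F, hFL, hF, heq⟩ := snapDown_mem (z := z) hq (fun i hi => (hh i hi).le) hzj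
  have hjF : j ∉ F := fun hjF => by linarith [hF j hjF, hh j hj]
  refine le_snapDown ⟨by linarith, a, insert j F, Finset.insert_subset hj hFL, ?_, ?_⟩
  · intro i hi
    rcases Finset.mem_insert.mp hi with rfl | hi
    · exact hjt
    · linarith [hF i hi, hh j hj]
  · rw [Finset.sum_insert hjF, heq]
    ring

end SnapDown

section Discretization

variable {ι : Type*} {T L : Finset ι} {w d h x y z : ι → ℝ} {q μ : ℝ}

lemma isPacking_snapDown {W D H : ℝ} [DecidableEq ι] (hp : IsPacking L w d h W D H x y z)
    (hq : 0 < q) (hh : ∀ j ∈ L, 0 < h j) :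
    IsPacking L w d h W D H x y fun i => snapDown L z h q (z i) :=
  hp.lower hh (fun i hi => zero_le_snapDown (hp.1 i hi).2.2.2.2.1)
    (fun i hi => snapDown_le hq (fun j hj => (hh j hj).le) (hp.1 i hi).2.2.2.2.1)
    fun i hi _ _ hij => snapDown_add_le_snapDown hq hh hi (hp.1 i hi).2.2.2.2.1 hij

lemma z_bounds_of_not_disjoint_lowered {wi di hi xi yi zi wl dl hl xl yl zl z' : ℝ}
    (hhi : 0 < hi) (hhl : 0 < hl) (hhiq : hi ≤ q) (hz'zl : z' ≤ zl) (hzl : zl < z' + q)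
    (hdisj : Disjoint (ItemRegion wi di hi xi yi zi) (ItemRegion wl dl hl xl yl zl))
    (hmeet : ¬ Disjoint (ItemRegion wi di hi xi yi zi) (ItemRegion wl dl hl xl yl z')) :
    z' - q ≤ zi ∧ zi + hi ≤ z' - q + 2 * q := by
  rw [disjoint_itemRegion_iff, disjoint_Ioo_add_iff hhi hhl] at hdisj hmeet
  simp only [not_or, not_le] at hmeet
  obtain ⟨hx, hy, hz'i, hiz'⟩ := hmeet
  rcases hdisj with hx' | hy' | hzi | hzi
  · exact absurd hx' hx
  · exact absurd hy' hy
  · constructor <;> linarith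
  · linarith

lemma card_mul_pow_three_le (hp : IsPacking T w d h 1 1 1 x y z) (hμ : 0 ≤ μ)
    (hT : ∀ i ∈ T, μ ≤ w i ∧ μ ≤ d i ∧ μ ≤ h i) : T.card * μ ^ 3 ≤ 1 := by
  have hdims : ∀ i ∈ T, 0 ≤ w i ∧ 0 ≤ d i ∧ 0 ≤ h i := fun i hi => by
    obtain ⟨hw, hd, hh⟩ := hT i hi
    exact ⟨hμ.trans hw, hμ.trans hd, hμ.trans hh⟩
  calc T.card * μ ^ 3 = ∑ _ ∈ T, μ * μ * μ := by rw [Finset.sum_const, nsmul_eq_mul]; ring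
    _ ≤ ∑ i ∈ T, w i * d i * h i := Finset.sum_le_sum fun i hi => by
        obtain ⟨hw, hd, hh⟩ := hT i hi
        obtain ⟨hw0, hd0, -⟩ := hdims i hi
        exact mul_le_mul (mul_le_mul hw hd hμ hw0) hh hμ (mul_nonneg hw0 hd0)
    _ ≤ 1 * 1 * 1 := hp.sum_volume_le hdims zero_le_one zero_le_one zero_le_one
    _ = 1 := by norm_num

lemma sum_volume_le_of_not_disjoint_lowered {R : Finset ι} {l : ι} {z' : ℝ}
    (hp : IsPacking T w d h 1 1 1 x y z) (hRT : R ⊆ T) (hlT : l ∈ T)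
    (hpos : ∀ i ∈ T, 0 < w i ∧ 0 < d i ∧ 0 < h i) (hlq : q < h l) (hz'zl : z' ≤ z l)
    (hzl : z l < z' + q)
    (hR : ∀ i ∈ R, h i ≤ q ∧ ¬ Disjoint (ItemRegion (w i) (d i) (h i) (x i) (y i) (z i))
        (ItemRegion (w l) (d l) (h l) (x l) (y l) z')) :
    ∑ i ∈ R, w i * d i * h i ≤ 2 * q := by
  have hq : 0 < q := by linarith
  calc _ ≤ 1 * 1 * (2 * q) := by
        refine sum_volume_le_of_subset_itemRegion (a := 0) (b := 0) (c := z' - q)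
          (fun i hi => ?_) zero_le_one zero_le_one (by positivity) (fun i hi => ?_)
          fun i hi j hj => hp.2 i (hRT hi) j (hRT hj)
        · obtain ⟨hw, hd, hh⟩ := hpos i (hRT hi)
          exact ⟨hw.le, hd.le, hh.le⟩
        · obtain ⟨hiq, hmeet⟩ := hR i hi
          have hil : i ≠ l := by rintro rfl; linarith
          obtain ⟨hz1, hz2⟩ := z_bounds_of_not_disjoint_lowered (hpos i (hRT hi)).2.2
            (hpos l hlT).2.2 hiq hz'zl hzl (hp.2 i (hRT hi) l hlT hil) hmeet
          obtain ⟨hx, hxw, hy, hyd, -, -⟩ := hp.1 i (hRT hi)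
          exact itemRegion_subset_itemRegion hx (by linarith) hy (by linarith) hz1 hz2
    _ = 2 * q := by ring

lemma sum_volume_le_card_mul_of_not_disjoint_lowered {R : Finset ι} {z' : ι → ℝ}
    (hp : IsPacking T w d h 1 1 1 x y z) (hLT : L ⊆ T) (hRT : R ⊆ T)
    (hpos : ∀ i ∈ T, 0 < w i ∧ 0 < d i ∧ 0 < h i) (hLq : ∀ l ∈ L, q < h l)
    (hz' : ∀ l ∈ L, z' l ≤ z l ∧ z l < z' l + q)
    (hR : ∀ i ∈ R, h i ≤ q ∧ ∃ l ∈ L, ¬ Disjoint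
      (ItemRegion (w i) (d i) (h i) (x i) (y i) (z i))
      (ItemRegion (w l) (d l) (h l) (x l) (y l) (z' l))) :
    ∑ i ∈ R, w i * d i * h i ≤ L.card * (2 * q) := by
  classical
  set hit : ι → ι → Prop := fun i l => ¬ Disjoint
    (ItemRegion (w i) (d i) (h i) (x i) (y i) (z i))
    (ItemRegion (w l) (d l) (h l) (x l) (y l) (z' l))
  have hv : ∀ i ∈ R, 0 ≤ w i * d i * h i := fun i hi => by
    obtain ⟨hw, hd, hh⟩ := hpos i (hRT hi)
    positivity
  have hcover : R ⊆ L.biUnion fun l => R.filter (hit · l) := fun i hi => by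
    obtain ⟨l, hl, hil⟩ := (hR i hi).2
    exact Finset.mem_biUnion.mpr ⟨l, hl, Finset.mem_filter.mpr ⟨hi, hil⟩⟩
  have hcoverR : (L.biUnion fun l => R.filter (hit · l)) ⊆ R :=
    Finset.biUnion_subset.mpr fun _ _ => Finset.filter_subset _ _
  calc ∑ i ∈ R, w i * d i * h i
      ≤ ∑ i ∈ L.biUnion fun l => R.filter (hit · l), w i * d i * h i :=
        Finset.sum_le_sum_of_subset_of_nonneg hcover fun i hi _ => hv i (hcoverR hi)
    _ ≤ ∑ l ∈ L, ∑ i ∈ R.filter (hit · l), w i * d i * h i :=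
        Finset.sum_biUnion_le_sum_sum fun i hi => hv i (hcoverR hi)
    _ ≤ ∑ _ ∈ L, 2 * q := Finset.sum_le_sum fun l hl =>
        sum_volume_le_of_not_disjoint_lowered hp ((Finset.filter_subset _ _).trans hRT)
          (hLT hl) hpos (hLq l hl) (hz' l hl).1 (hz' l hl).2
          fun i hi => ⟨(hR i (Finset.mem_filter.mp hi).1).1, (Finset.mem_filter.mp hi).2⟩
    _ = L.card * (2 * q) := by rw [Finset.sum_const, nsmul_eq_mul]

lemma exists_snapDown_eq [DecidableEq ι] {l : ι} (hq : 0 < q) (hμ : 0 < μ)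
    (hLμ : ∀ j ∈ L, μ ≤ h j) (hl : l ∈ L) (hz0 : 0 ≤ z l) (hz1 : z l + h l ≤ 1) :
    ∃ a : ℕ, ∃ F ⊆ L.erase l, F.card ≤ ⌊1 / μ⌋₊ ∧
      snapDown L z h q (z l) = a * q + ∑ j ∈ F, h j := by
  obtain ⟨hle, a, F, hFL, hF, heq⟩ :=
    snapDown_mem (z := z) hq (fun j hj => hμ.le.trans (hLμ j hj)) hz0
  have hFl : F ⊆ L.erase l := fun j hj =>
    Finset.mem_erase.mpr ⟨by rintro rfl; linarith [hF j hj, hLμ j hl], hFL hj⟩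
  have haq : (0 : ℝ) ≤ a * q := by positivity
  refine ⟨a, F, hFl, Finset.card_le_floor_of_sum_le hμ (fun j hj => hLμ j (hFL hj)) ?_, heq⟩
  linarith [hLμ l hl]

end Discretization

/-- Discretizing the `z`-positions of large items: if
`L ∪ S` packs into the unit cube, where every item of `L` has all dimensions
exceeding `μ` and every item of `S` has height at most `μ⁴`, then there is a
subset `S' ⊆ S` with `v(S ∖ S') ≤ 2μ` and a packing of `L ∪ S'` into the unit
cube in which every `ℓ ∈ L` sits at a `z`-coordinate of the form
`a·μ⁴ + Σ_{j ∈ F} h j` for some `a : ℕ` and `F ⊆ L ∖ {ℓ}` with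
`|F| ≤ ⌊1/μ⌋`. -/
theorem stmt4 {ι : Type*} [DecidableEq ι] (L S : Finset ι) (w d h : ι → ℝ)
    (μ : ℝ) (hμpos : 0 < μ) (hμle : μ ≤ 1 / 2)
    (hdims : ∀ i ∈ L ∪ S, 0 < w i ∧ w i ≤ 1 ∧ 0 < d i ∧ d i ≤ 1 ∧
      0 < h i ∧ h i ≤ 1)
    (hL : ∀ i ∈ L, μ < w i ∧ μ < d i ∧ μ < h i)
    (hS : ∀ i ∈ S, h i ≤ μ ^ 4)
    (hpack : CanPack (L ∪ S) w d h 1 1 1) :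
    ∃ S' ⊆ S, (∑ i ∈ S \ S', w i * d i * h i) ≤ 2 * μ ∧
      ∃ x y z : ι → ℝ, IsPacking (L ∪ S') w d h 1 1 1 x y z ∧
        ∀ l ∈ L, ∃ a : ℕ, ∃ F ⊆ L.erase l, F.card ≤ ⌊1 / μ⌋₊ ∧
          z l = a * μ ^ 4 + ∑ j ∈ F, h j := by
  classical
  obtain ⟨x, y, z, hp⟩ := hpack
  have hq : 0 < μ ^ 4 := by positivity
  have hpos : ∀ i ∈ L ∪ S, 0 < w i ∧ 0 < d i ∧ 0 < h i := fun i hi => by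
    obtain ⟨hw, -, hd, -, hh, -⟩ := hdims i hi
    exact ⟨hw, hd, hh⟩
  have hLh : ∀ j ∈ L, 0 ≤ h j := fun j hj => hμpos.le.trans (hL j hj).2.2.le
  have hz0 : ∀ i ∈ L, 0 ≤ z i := fun i hi => (hp.1 i (Finset.mem_union_left _ hi)).2.2.2.2.1
  set N : ι → ℝ := fun i => snapDown L z h (μ ^ 4) (z i)
  set S' := S.filter fun i => ∀ l ∈ L, Disjoint
    (ItemRegion (w i) (d i) (h i) (x i) (y i) (z i))
    (ItemRegion (w l) (d l) (h l) (x l) (y l) (N l))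
  have hpL := hp.subset Finset.subset_union_left
  refine ⟨S', Finset.filter_subset _ _, ?_, x, y, fun i => if i ∈ L then N i else z i,
    (isPacking_snapDown hpL hq fun j hj => hμpos.trans (hL j hj).2.2).union_ite
      ((hp.subset Finset.subset_union_right).subset (Finset.filter_subset _ _))
      fun l hl i hi _ => ((Finset.mem_filter.mp hi).2 l hl).symm,
    fun l hl => ?_⟩
  · have hqμ : μ ^ 4 ≤ μ := pow_le_of_le_one hμpos.le (by linarith) (by norm_num)
    have hcard := card_mul_pow_three_le hpL hμpos.le
      fun i hi => ⟨(hL i hi).1.le, (hL i hi).2.1.le, (hL i hi).2.2.le⟩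
    calc ∑ i ∈ S \ S', w i * d i * h i ≤ L.card * (2 * μ ^ 4) :=
          sum_volume_le_card_mul_of_not_disjoint_lowered hp Finset.subset_union_left
            (Finset.sdiff_subset.trans Finset.subset_union_right) hpos
            (fun l hl => hqμ.trans_lt (hL l hl).2.2)
            (fun l hl => ⟨snapDown_le hq hLh (hz0 l hl), lt_snapDown_add hq hLh (hz0 l hl)⟩)
            fun i hi => by
              obtain ⟨hiS, hiS'⟩ := Finset.mem_sdiff.mp hi
              simpa [S', hiS, hS i hiS] using hiS'
      _ ≤ 2 * μ := by nlinarith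
  · simp only [hl, if_true]
    exact exists_snapDown_eq hq hμpos (fun j hj => (hL j hj).2.2.le) hl (hz0 l hl)
      (hp.1 l (Finset.mem_union_left _ hl)).2.2.2.2.2
end

section
/- Let k ≥ 2 be an integer and let α_1, …, α_n ∈ (0,1] satisfy Σ_{i=1}^n α_i ≤ 1. Then Σ_{i=1}^n f_k(α_i) ≤ T_k. -/
/-!
Write `q = ⌊1/α⌋`. An item `α > 1/k` has `1/(q+1) < α` and `q < k`, so `f_k` raises it by less
than `1/q - 1/(q+1) = 1/(q(q+1))`, while smaller items are unchanged. It remains to solve a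
knapsack problem: items of cost `1/(q+1)` and profit `1/(q(q+1))`, with `q < t_{m+1}`, packed into
a budget `< 1/t_j` (initially `j = 1`). The smallest `q` of the packing is at least `t_j`. If it
equals `t_j`, that item earns `1/t_{j+1}` and leaves the budget `1/t_j - 1/(t_j+1) = 1/t_{j+1}`
to the others; if it is larger, the whole profit is below `1/(t_j+1) · 1/t_j = 1/t_{j+1}`. By
induction the profit is at most `Σ_{i=j+1}^{m+1} 1/t_i`, and finally
`1/t_{m+1} ≤ k/(t_{m+1}(k-1))`.
-/

open Finset

/-- The harmonic rounding function of Lee and Lee: `fk k α = 1/q` if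
`α ∈ (1/(q+1), 1/q]` for some `q ∈ {1, …, k−1}` (equivalently `q = ⌊1/α⌋`
when `1/k < α ≤ 1`), and `fk k α = α` for `α ≤ 1/k`. -/
noncomputable def fk (k : ℕ) (α : ℝ) : ℝ :=
  if α ≤ 1 / k then α else 1 / (⌊1 / α⌋₊ : ℝ)

lemma fk_of_le {k : ℕ} {α : ℝ} (h : α ≤ 1 / k) : fk k α = α := if_pos h

lemma floor_one_div_lt {k : ℕ} {α : ℝ} (hk : 0 < k) (hα : 0 < α) (hkα : 1 / (k : ℝ) < α) :
    ⌊1 / α⌋₊ < k := (Nat.floor_lt (by positivity)).2 ((one_div_lt hα (by positivity)).2 hkα)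

lemma one_div_floor_one_div_add_one_lt {α : ℝ} (hα : 0 < α) :
    1 / ((⌊1 / α⌋₊ : ℝ) + 1) < α :=
  (one_div_lt (by positivity) hα).2 (Nat.lt_floor_add_one _)

lemma fk_sub_lt {k : ℕ} {α : ℝ} (hα : 0 < α) (hα1 : α ≤ 1) (hkα : 1 / (k : ℝ) < α) :
    fk k α - α < 1 / ((⌊1 / α⌋₊ : ℝ) * (⌊1 / α⌋₊ + 1)) := by
  have hq : (1 : ℝ) ≤ ⌊1 / α⌋₊ := by
    exact_mod_cast Nat.one_le_floor_iff _ |>.2 (by rwa [le_div_iff₀ hα, one_mul])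
  have hcost := one_div_floor_one_div_add_one_lt hα
  have hgain : 1 / (⌊1 / α⌋₊ : ℝ) - 1 / (⌊1 / α⌋₊ + 1) = 1 / (⌊1 / α⌋₊ * (⌊1 / α⌋₊ + 1)) := by
    field_simp
    ring
  rw [fk, if_neg (not_le.2 hkα)]
  linarith

lemma sum_one_div_mul_succ_le {ι : Type*} {s : Finset ι} {q : ι → ℕ} {c : ℝ} (hc : 0 < c)
    (hcq : ∀ i ∈ s, c ≤ q i) :
    ∑ i ∈ s, (1 : ℝ) / (q i * (q i + 1)) ≤ 1 / c * ∑ i ∈ s, 1 / ((q i : ℝ) + 1) := by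
  rw [mul_sum]
  refine sum_le_sum fun i hi => ?_
  rw [one_div_mul_one_div]
  have := hcq i hi
  gcongr

section Sylvester

variable {t : ℕ → ℕ}

lemma pos_of_sylvester_rec (htrec : ∀ i, 1 ≤ i → t (i + 1) = t i * (t i + 1)) (ht1 : 0 < t 1) :
    ∀ i, 1 ≤ i → 0 < t i := by
  intro i hi
  induction i, hi using Nat.le_induction with
  | base => exact ht1
  | succ i hi ih => rw [htrec i hi]; positivity

lemma le_of_sylvester_rec (htrec : ∀ i, 1 ≤ i → t (i + 1) = t i * (t i + 1)) {i j : ℕ}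
    (hi : 1 ≤ i) (hij : i ≤ j) : t i ≤ t j := by
  induction j, hij using Nat.le_induction with
  | base => rfl
  | succ j hij ih => rw [htrec j (hi.trans hij)]; nlinarith

lemma one_div_sub_one_div_succ_of_sylvester_rec
    (htrec : ∀ i, 1 ≤ i → t (i + 1) = t i * (t i + 1)) (htpos : ∀ i, 1 ≤ i → 0 < t i)
    {j : ℕ} (hj : 1 ≤ j) : (1 : ℝ) / t j - 1 / (t j + 1) = 1 / t (j + 1) := by
  have := htpos j hj
  rw [htrec j hj]
  field_simp
  push_cast
  ring

lemma sum_one_div_mul_succ_le_of_sum_one_div_succ_lt {ι : Type*} [DecidableEq ι]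
    (htrec : ∀ i, 1 ≤ i → t (i + 1) = t i * (t i + 1)) (htpos : ∀ i, 1 ≤ i → 0 < t i)
    (m : ℕ) (q : ι → ℕ) (s : Finset ι) (j : ℕ) (hj : 1 ≤ j) (hq : ∀ i ∈ s, q i < t (m + 1))
    (hbudget : ∑ i ∈ s, (1 : ℝ) / (q i + 1) < 1 / t j) :
    ∑ i ∈ s, (1 : ℝ) / (q i * (q i + 1)) ≤ ∑ i ∈ Icc (j + 1) (m + 1), (1 : ℝ) / t i := by
  induction s using Finset.strongInduction generalizing j with | H s ih => ?_
  rcases s.eq_empty_or_nonempty with rfl | hs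
  · rw [sum_empty]
    exact sum_nonneg fun i _ => by positivity
  obtain ⟨i₀, hi₀, hmin⟩ := s.exists_min_image q hs
  have htj : (0 : ℝ) < t j := by exact_mod_cast htpos j hj
  have hrec : (t (j + 1) : ℝ) = t j * (t j + 1) := by exact_mod_cast htrec j hj
  have hcost : (1 : ℝ) / (q i₀ + 1) < 1 / t j :=
    (single_le_sum (fun i _ => by positivity) hi₀).trans_lt hbudget
  have hge : t j ≤ q i₀ := by
    have : (t j : ℝ) < q i₀ + 1 := (one_div_lt_one_div (by positivity) htj).1 hcost
    exact Nat.lt_succ_iff.1 (by exact_mod_cast this)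
  have hjm : j + 1 ≤ m + 1 := by
    by_contra h
    have := le_of_sylvester_rec htrec (by omega : 1 ≤ m + 1) (by omega : m + 1 ≤ j)
    have := hq i₀ hi₀
    omega
  rcases hge.eq_or_lt with heq | hlt
  · have hprofit : (1 : ℝ) / (q i₀ * (q i₀ + 1)) = 1 / t (j + 1) := by rw [hrec, ← heq]
    have hrest : ∑ i ∈ s.erase i₀, (1 : ℝ) / (q i + 1) < 1 / t (j + 1) := by
      rw [← add_sum_erase _ _ hi₀, ← heq] at hbudget
      linarith [one_div_sub_one_div_succ_of_sylvester_rec htrec htpos hj]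
    have := ih (s.erase i₀) (erase_ssubset hi₀) (j + 1) (by omega)
      (fun i hi => hq i (mem_of_mem_erase hi)) hrest
    rw [← add_sum_erase _ _ hi₀, ← insert_Icc_add_one_left_eq_Icc hjm,
      sum_insert (by simp), hprofit]
    gcongr
  · have hq₀ : (t j : ℝ) + 1 ≤ q i₀ := by exact_mod_cast hlt
    calc ∑ i ∈ s, (1 : ℝ) / (q i * (q i + 1))
        ≤ 1 / (t j + 1) * ∑ i ∈ s, 1 / ((q i : ℝ) + 1) :=
          sum_one_div_mul_succ_le (by positivity) fun i hi =>
            hq₀.trans (by exact_mod_cast hmin i hi)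
      _ ≤ 1 / (t j + 1) * (1 / t j) := by gcongr
      _ = 1 / t (j + 1) := by rw [hrec, one_div_mul_one_div, mul_comm]
      _ ≤ ∑ i ∈ Icc (j + 1) (m + 1), (1 : ℝ) / t i :=
          single_le_sum (f := fun i => (1 : ℝ) / t i) (fun i _ => by positivity)
            (mem_Icc.2 ⟨le_rfl, hjm⟩)

end Sylvester

lemma sum_fk_le_add_sum_filter {ι : Type*} (s : Finset ι) (k : ℕ) (α : ι → ℝ)
    (hα : ∀ i ∈ s, 0 < α i ∧ α i ≤ 1) :
    ∑ i ∈ s, fk k (α i) ≤ ∑ i ∈ s, α i +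
      ∑ i ∈ s with 1 / (k : ℝ) < α i, 1 / ((⌊1 / α i⌋₊ : ℝ) * (⌊1 / α i⌋₊ + 1)) := by
  rw [sum_filter, ← sum_add_distrib]
  refine sum_le_sum fun i hi => ?_
  split_ifs with h
  · linarith [fk_sub_lt (hα i hi).1 (hα i hi).2 h]
  · rw [fk_of_le (not_lt.1 h), add_zero]

lemma sum_filter_one_div_floor_add_one_lt {ι : Type*} (s : Finset ι) (p : ι → Prop)
    [DecidablePred p] (α : ι → ℝ) (hα : ∀ i ∈ s, 0 < α i) (hsum : ∑ i ∈ s, α i ≤ 1) :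
    ∑ i ∈ s with p i, 1 / ((⌊1 / α i⌋₊ : ℝ) + 1) < 1 := by
  rcases (s.filter p).eq_empty_or_nonempty with hS | hS
  · simp [hS]
  calc ∑ i ∈ s with p i, 1 / ((⌊1 / α i⌋₊ : ℝ) + 1)
      < ∑ i ∈ s with p i, α i := sum_lt_sum_of_nonempty hS fun i hi =>
        one_div_floor_one_div_add_one_lt (hα i (mem_filter.1 hi).1)
    _ ≤ ∑ i ∈ s, α i :=
        sum_le_sum_of_subset_of_nonneg (filter_subset _ _) fun i hi _ => (hα i hi).le
    _ ≤ 1 := hsum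

lemma one_div_le_div_mul_sub_one {x y : ℝ} (hx : 0 < x) (hy : 1 < y) :
    1 / x ≤ y / (x * (y - 1)) := by
  rw [div_le_div_iff₀ hx (by nlinarith)]
  nlinarith

theorem stmt8_general (k : ℕ) (hk : 2 ≤ k)
    (t : ℕ → ℕ) (ht1 : t 1 = 1)
    (htrec : ∀ i, 1 ≤ i → t (i + 1) = t i * (t i + 1))
    (m : ℕ) (hmhi : k < t (m + 1))
    (n : ℕ) (α : Fin n → ℝ)
    (hα : ∀ i, 0 < α i ∧ α i ≤ 1)
    (hsum : ∑ i, α i ≤ 1) :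
    ∑ i, fk k (α i) ≤
      (∑ q ∈ Finset.Icc 1 m, (1 : ℝ) / (t q)) +
        (k : ℝ) / ((t (m + 1) : ℝ) * ((k : ℝ) - 1)) := by
  have htpos := pos_of_sylvester_rec htrec (by omega)
  have hbudget := sum_filter_one_div_floor_add_one_lt univ (fun i => 1 / (k : ℝ) < α i) α
    (fun i _ => (hα i).1) hsum
  have hprofit := sum_one_div_mul_succ_le_of_sum_one_div_succ_lt htrec htpos m
    (fun i => ⌊1 / α i⌋₊) _ 1 le_rfl
    (fun i hi => (floor_one_div_lt (by omega) (hα i).1 (mem_filter.1 hi).2).trans hmhi)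
    (by rwa [ht1, Nat.cast_one, div_one])
  have htm : (0 : ℝ) < t (m + 1) := by exact_mod_cast htpos (m + 1) (by omega)
  have hk1 : (1 : ℝ) < k := by exact_mod_cast hk
  calc ∑ i, fk k (α i)
      ≤ 1 / t 1 + ∑ i ∈ Icc 2 (m + 1), (1 : ℝ) / t i := by
        rw [ht1, Nat.cast_one, div_one]
        exact (sum_fk_le_add_sum_filter univ k α fun i _ => hα i).trans (add_le_add hsum hprofit)
    _ = ∑ i ∈ Icc 1 m, (1 : ℝ) / t i + 1 / t (m + 1) := by
        rw [← sum_Icc_succ_top (by omega), ← insert_Icc_add_one_left_eq_Icc (by omega : 1 ≤ m + 1),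
          sum_insert (by simp)]
        rfl
    _ ≤ _ := add_le_add le_rfl (one_div_le_div_mul_sub_one htm hk1)

/-- For any integer `k ≥ 2` and reals `α₁, …, αₙ ∈ (0,1]`
with `Σ αᵢ ≤ 1`, we have `Σ fk k (αᵢ) ≤ T_k`, where the harmonic constant is
`T_k = Σ_{q=1}^{m} 1/t_q + k/(t_{m+1}·(k−1))` with `t` the Sylvester-type
sequence (`t 1 = 1`, `t (i+1) = t i · (t i + 1)`) and `m = m(k)` the unique
index with `t m ≤ k < t (m+1)`. -/
theorem stmt8 (k : ℕ) (hk : 2 ≤ k)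
    (t : ℕ → ℕ) (ht1 : t 1 = 1)
    (htrec : ∀ i, 1 ≤ i → t (i + 1) = t i * (t i + 1))
    (m : ℕ) (hm1 : 1 ≤ m) (hmlo : t m ≤ k) (hmhi : k < t (m + 1))
    (n : ℕ) (α : Fin n → ℝ)
    (hα : ∀ i, 0 < α i ∧ α i ≤ 1)
    (hsum : ∑ i, α i ≤ 1) :
    ∑ i, fk k (α i) ≤
      (∑ q ∈ Finset.Icc 1 m, (1 : ℝ) / (t q)) +
        (k : ℝ) / ((t (m + 1) : ℝ) * ((k : ℝ) - 1)) :=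
  stmt8_general k hk t ht1 htrec m hmhi n α hα hsum
end

section
/- Let T be a finite set of 3D items packed into the strip [0,1]×[0,1]×[0,H]. Then there exists a packing of T into the same strip [0,1]×[0,1]×[0,H] such that every item i either has z_i = 0 or there exists another item j with z_i = z_j + h_j and such that the open rectangles (x_i,x_i+w_i)×(y_i,y_i+d_i) and (x_j,x_j+w_j)×(y_j,y_j+d_j) intersect (i.e., every item stands on the floor of the strip or directly on top of another item). -/
/-!
Let the items fall, one at a time in the order of their original heights: each comes to rest on
the floor or on the highest top among the already placed items whose bases overlap its own. By
induction no item rises. Indeed, an earlier item whose base overlaps that of the falling one lay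
entirely below it in the original packing, since the two were disjoint and the earlier one started
lower; as it has itself only fallen, its top is below the original bottom of the falling item.
-/

open Set Finset

lemma Ioo_disjoint_Ioo_of_le {a b c d : ℝ} (h : b ≤ c) : Disjoint (Ioo a b) (Ioo c d) :=
  (Ioc_disjoint_Ioc_of_le h).mono Ioo_subset_Ioc_self Ioo_subset_Ioc_self

lemma add_le_of_disjoint_Ioo {a b s t : ℝ} (ht : 0 < t) (hab : a ≤ b)
    (h : Disjoint (Ioo a (a + s)) (Ioo b (b + t))) : a + s ≤ b := by
  rw [Ioo_disjoint_Ioo, max_eq_right hab] at h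
  by_contra! hlt
  exact (lt_min hlt (lt_add_of_pos_right b ht)).not_ge h

section Settling

variable {ι : Type*} (w d h x y : ι → ℝ)

def baseRect (i : ι) : Set (ℝ × ℝ) := Ioo (x i) (x i + w i) ×ˢ Ioo (y i) (y i + d i)

def region (z : ι → ℝ) (i : ι) : Set (ℝ × ℝ × ℝ) :=
  ItemRegion (w i) (d i) (h i) (x i) (y i) (z i)

def StandsOn (z : ι → ℝ) (i j : ι) : Prop :=
  z i = z j + h j ∧ (baseRect w d x y i ∩ baseRect w d x y j).Nonempty

noncomputable def supportTops (s : Finset ι) (z : ι → ℝ) (a : ι) : Finset ℝ :=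
  open Classical in
  (s.filter fun j => (baseRect w d x y a ∩ baseRect w d x y j).Nonempty).image fun j => z j + h j

/-- The height at which item `a` comes to rest when it is dropped onto the items of `s` placed at
heights `z`. An item of non-positive height occupies no space and is put on the floor. -/
noncomputable def dropHeight (s : Finset ι) (z : ι → ℝ) (a : ι) : ℝ :=
  if 0 < h a then (insert 0 (supportTops w d h x y s z a)).max' (insert_nonempty _ _) else 0

structure IsSettling (T : Finset ι) (z z' : ι → ℝ) : Prop where
  nonneg : ∀ i ∈ T, 0 ≤ z' i
  le : ∀ i ∈ T, z' i ≤ z i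
  pairwiseDisjoint : (T : Set ι).PairwiseDisjoint (region w d h x y z')
  grounded : ∀ i ∈ T, z' i = 0 ∨ ∃ j ∈ T, j ≠ i ∧ StandsOn w d h x y z' i j

variable {w d h x y}

lemma region_disjoint_iff {z : ι → ℝ} {i j : ι} :
    Disjoint (region w d h x y z i) (region w d h x y z j) ↔
      Disjoint (baseRect w d x y i) (baseRect w d x y j) ∨
        Disjoint (Ioo (z i) (z i + h i)) (Ioo (z j) (z j + h j)) := by
  simp only [region, ItemRegion, baseRect, disjoint_prod, or_assoc]

section dropHeight

variable {s : Finset ι} {z : ι → ℝ} {a : ι}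

lemma mem_supportTops {t : ℝ} :
    t ∈ supportTops w d h x y s z a ↔
      ∃ j ∈ s, (baseRect w d x y a ∩ baseRect w d x y j).Nonempty ∧ z j + h j = t := by
  classical
  simp [supportTops, and_assoc]

lemma dropHeight_nonneg : 0 ≤ dropHeight w d h x y s z a := by
  unfold dropHeight
  split_ifs
  · exact le_max' _ _ (mem_insert_self _ _)
  · rfl

lemma add_le_dropHeight (ha : 0 < h a) {j : ι} (hj : j ∈ s)
    (hov : (baseRect w d x y a ∩ baseRect w d x y j).Nonempty) :
    z j + h j ≤ dropHeight w d h x y s z a := by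
  rw [dropHeight, if_pos ha]
  exact le_max' _ _ (mem_insert_of_mem (mem_supportTops.mpr ⟨j, hj, hov, rfl⟩))

lemma dropHeight_le {B : ℝ} (hB : 0 ≤ B)
    (hle : 0 < h a → ∀ j ∈ s, (baseRect w d x y a ∩ baseRect w d x y j).Nonempty →
      z j + h j ≤ B) :
    dropHeight w d h x y s z a ≤ B := by
  unfold dropHeight
  split_ifs with ha
  · refine max'_le _ _ _ fun t ht => ?_
    rcases mem_insert.mp ht with rfl | ht
    · exact hB
    · obtain ⟨j, hj, hov, rfl⟩ := mem_supportTops.mp ht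
      exact hle ha j hj hov
  · exact hB

lemma dropHeight_eq_zero_or :
    dropHeight w d h x y s z a = 0 ∨ ∃ j ∈ s,
      (baseRect w d x y a ∩ baseRect w d x y j).Nonempty ∧
        dropHeight w d h x y s z a = z j + h j := by
  unfold dropHeight
  split_ifs
  · rcases mem_insert.mp (max'_mem (insert 0 (supportTops w d h x y s z a)) (insert_nonempty _ _))
      with h0 | hmem
    · exact .inl h0
    · obtain ⟨j, hj, hov, hmax⟩ := mem_supportTops.mp hmem
      exact .inr ⟨j, hj, hov, hmax.symm⟩
  · exact .inl rfl

end dropHeight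

lemma dropHeight_le_of_disjoint {s : Finset ι} {z z' : ι → ℝ} {a : ι}
    (hle : ∀ j ∈ s, z' j ≤ z j) (hza : 0 ≤ z a) (hmax : ∀ j ∈ s, z j ≤ z a)
    (hdisj : ∀ j ∈ s, Disjoint (region w d h x y z j) (region w d h x y z a)) :
    dropHeight w d h x y s z' a ≤ z a := by
  refine dropHeight_le hza fun hpos j hj hov => ?_
  have hsep : Disjoint (Ioo (z j) (z j + h j)) (Ioo (z a) (z a + h a)) := by
    refine (region_disjoint_iff.mp (hdisj j hj)).resolve_left ?_
    rw [disjoint_comm, Set.not_disjoint_iff_nonempty_inter]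
    exact hov
  linarith [hle j hj, add_le_of_disjoint_Ioo hpos (hmax j hj) hsep]

theorem IsSettling.insert [DecidableEq ι] {s : Finset ι} {z z' : ι → ℝ} {a : ι}
    (hs : IsSettling w d h x y s z z') (ha : a ∉ s) (hza : 0 ≤ z a)
    (hmax : ∀ j ∈ s, z j ≤ z a)
    (hdisj : ∀ j ∈ s, Disjoint (region w d h x y z j) (region w d h x y z a)) :
    IsSettling w d h x y (insert a s) z (Function.update z' a (dropHeight w d h x y s z' a)) := by
  set z'' := Function.update z' a (dropHeight w d h x y s z' a)
  have hz''a : z'' a = dropHeight w d h x y s z' a := Function.update_self ..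
  have hz''s : ∀ j ∈ s, z'' j = z' j := fun j hj =>
    Function.update_of_ne (ne_of_mem_of_not_mem hj ha) ..
  refine ⟨fun i hi => ?_, fun i hi => ?_, ?_, fun i hi => ?_⟩
  · rcases mem_insert.mp hi with rfl | hi
    · exact hz''a ▸ dropHeight_nonneg
    · exact hz''s i hi ▸ hs.nonneg i hi
  · rcases mem_insert.mp hi with rfl | hi
    · exact hz''a ▸ dropHeight_le_of_disjoint hs.le hza hmax hdisj
    · exact hz''s i hi ▸ hs.le i hi
  · have hregion : ∀ j ∈ s, region w d h x y z'' j = region w d h x y z' j := fun j hj => by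
      simp only [region, hz''s j hj]
    rw [coe_insert, pairwiseDisjoint_insert]
    refine ⟨fun i hi j hj hij => ?_, fun j hj _ => ?_⟩
    · simpa only [Function.onFun, hregion i hi, hregion j hj] using hs.pairwiseDisjoint hi hj hij
    · rw [region_disjoint_iff, hz''a, hz''s j hj, or_iff_not_imp_left,
        Set.not_disjoint_iff_nonempty_inter]
      intro hov
      by_cases hpos : 0 < h a
      · exact (Ioo_disjoint_Ioo_of_le (add_le_dropHeight hpos hj hov)).symm
      · rw [Set.Ioo_eq_empty (by linarith)]
        exact Set.empty_disjoint _
  · rcases mem_insert.mp hi with rfl | hi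
    · rcases @dropHeight_eq_zero_or _ w d h x y s z' i with h0 | ⟨j, hj, hov, heq⟩
      · exact .inl (hz''a.trans h0)
      · exact .inr ⟨j, mem_insert_of_mem hj, ne_of_mem_of_not_mem hj ha,
          by rw [hz''a, hz''s j hj, heq], hov⟩
    · rcases hs.grounded i hi with h0 | ⟨j, hj, hne, heq, hov⟩
      · exact .inl (hz''s i hi ▸ h0)
      · exact .inr ⟨j, mem_insert_of_mem hj, hne, by rw [hz''s i hi, hz''s j hj, heq], hov⟩

theorem exists_isSettling (T : Finset ι) (z : ι → ℝ) (hz : ∀ i ∈ T, 0 ≤ z i)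
    (hdisj : (T : Set ι).PairwiseDisjoint (region w d h x y z)) :
    ∃ z', IsSettling w d h x y T z z' := by
  classical
  induction T using Finset.induction_on_max_value z with
  | empty => exact ⟨z, ⟨by simp, by simp, by simp, by simp⟩⟩
  | insert a s ha hmax ih =>
    obtain ⟨z', hz'⟩ := ih (fun i hi => hz i (mem_insert_of_mem hi))
      (hdisj.subset (by simp))
    exact ⟨_, hz'.insert ha (hz a (mem_insert_self a s)) hmax fun j hj =>
      hdisj (mem_insert_of_mem hj) (mem_insert_self a s) (ne_of_mem_of_not_mem hj ha)⟩

end Settling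

/-- Any packing of `T` into the strip `[0,1] × [0,1] × [0,H]`
can be replaced by a packing into the same strip in which every item either
stands on the floor (`z' i = 0`) or directly on top of another item (`z' i =
z' j + h j` and the open base rectangles of `i` and `j` intersect). -/
theorem stmt12 {ι : Type*} (T : Finset ι) (w d h : ι → ℝ) (H : ℝ)
    (x y z : ι → ℝ)
    (hpack : IsPacking T w d h 1 1 H x y z) :
    ∃ x' y' z' : ι → ℝ, IsPacking T w d h 1 1 H x' y' z' ∧
      ∀ i ∈ T, z' i = 0 ∨ ∃ j ∈ T, j ≠ i ∧ z' i = z' j + h j ∧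
        ((Set.Ioo (x' i) (x' i + w i) ×ˢ Set.Ioo (y' i) (y' i + d i)) ∩
          (Set.Ioo (x' j) (x' j + w j) ×ˢ
            Set.Ioo (y' j) (y' j + d j))).Nonempty := by
  obtain ⟨hfit, hdisj⟩ := hpack
  obtain ⟨z', hz'⟩ := exists_isSettling T z (fun i hi => (hfit i hi).2.2.2.2.1) hdisj
  refine ⟨x, y, z', ⟨fun i hi => ?_, hz'.pairwiseDisjoint⟩, hz'.grounded⟩
  obtain ⟨hx0, hx1, hy0, hy1, -, hzH⟩ := hfit i hi
  exact ⟨hx0, hx1, hy0, hy1, hz'.nonneg i hi, by linarith [hz'.le i hi]⟩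
end

section
/- Let ε ∈ (0,1) and let h_1, …, h_n ∈ (0,1] be heights such that every h_i with h_i > ε equals 1/q for some positive integer q. Then there exist real numbers z_1, …, z_n ≥ 0 such that the intervals [z_i, z_i + h_i) are pairwise disjoint, for every i with h_i = 1/q > ε the position z_i is an integer multiple of 1/q, and max_i (z_i + h_i) ≤ Σ_{i=1}^n h_i + Σ_{q=3}^{⌊1/ε⌋} 1/q. -/
/-!
Group the items by the denominator `q` of their height (tall items) and put all items of
height `≤ ε` into one last group. Stack the groups in increasing order of `q`, each as a
contiguous block whose start is rounded up to the next multiple of `1/q`; the last group is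
not rounded. Rounding loses less than `1/q` at group `q`, and nothing at all for `q ≤ 2`,
because the height reached before groups `1` and `2` is an integer.
-/

open Finset

namespace GroupedStack

variable {ι : Type*}

lemma exists_groupIndex {ε : ℝ} (hε : 0 < ε) {h : ι → ℝ}
    (htall : ∀ i, ε < h i → ∃ q : ℕ, 0 < q ∧ h i = 1 / q) :
    ∃ d : ι → ℕ, (∀ i, 1 ≤ d i ∧ d i ≤ ⌊1 / ε⌋₊ + 1) ∧ (∀ i, d i ≤ ⌊1 / ε⌋₊ → h i = 1 / d i) ∧
      ∀ i (q : ℕ), 0 < q → h i = 1 / q → ε < h i → d i = q ∧ q ≤ ⌊1 / ε⌋₊ := by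
  have index_of_tall : ∀ i (q : ℕ), 0 < q → h i = 1 / q → ε < h i →
      ⌊1 / h i⌋₊ = q ∧ q ≤ ⌊1 / ε⌋₊ := by
    intro i q hq hiq hεi
    have hq0 : (0 : ℝ) < q := by exact_mod_cast hq
    refine ⟨by rw [hiq, one_div_one_div, Nat.floor_natCast], Nat.le_floor ?_⟩
    rw [le_div_iff₀ hε, mul_comm]
    exact ((lt_div_iff₀ hq0).1 (hiq ▸ hεi)).le
  refine ⟨fun i => if ε < h i then ⌊1 / h i⌋₊ else ⌊1 / ε⌋₊ + 1, fun i => ?_, fun i hi => ?_,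
    fun i q hq hiq hεi => ?_⟩
  · dsimp only
    split_ifs with hεi
    · obtain ⟨q, hq, hiq⟩ := htall i hεi
      have := index_of_tall i q hq hiq hεi
      omega
    · omega
  · have hεi : ε < h i := by
      by_contra hεi
      simp [hεi] at hi
    obtain ⟨q, hq, hiq⟩ := htall i hεi
    dsimp only
    rw [if_pos hεi, (index_of_tall i q hq hiq hεi).1, hiq]
  · simpa only [if_pos hεi] using index_of_tall i q hq hiq hεi

variable [Fintype ι]

section Stack

variable (R : ℕ → ℝ → ℝ) (h : ι → ℝ) (d : ι → ℕ)

def groupHeight (q : ℕ) : ℝ := ∑ j with d j = q, h j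

/-- The height reached by the groups `0, …, q - 1`. -/
def groupFloor : ℕ → ℝ
  | 0 => 0
  | q + 1 => R q (groupFloor q) + groupHeight h d q

def groupStart (q : ℕ) : ℝ := R q (groupFloor R h d q)

def stackPos [LinearOrder ι] (i : ι) : ℝ :=
  groupStart R h d (d i) + ∑ j with d j = d i ∧ j < i, h j

variable {R h d}

lemma groupFloor_succ (q : ℕ) :
    groupFloor R h d (q + 1) = groupStart R h d q + groupHeight h d q := rfl

lemma groupHeight_nonneg (hh : ∀ i, 0 ≤ h i) (q : ℕ) : 0 ≤ groupHeight h d q :=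
  sum_nonneg fun j _ => hh j

lemma groupHeight_eq_card_mul {q : ℕ} {c : ℝ} (hc : ∀ j, d j = q → h j = c) :
    groupHeight h d q = #{j | d j = q} * c := by
  rw [groupHeight, sum_congr rfl fun j hj => hc j (mem_filter.1 hj).2, sum_const, nsmul_eq_mul]

lemma groupHeight_eq_zero {q : ℕ} (hq : ∀ i, d i ≠ q) : groupHeight h d q = 0 :=
  sum_eq_zero fun j hj => absurd (mem_filter.1 hj).2 (hq j)

lemma groupFloor_le_groupStart (hR : ∀ q x, x ≤ R q x) (q : ℕ) :
    groupFloor R h d q ≤ groupStart R h d q :=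
  hR _ _

lemma groupFloor_mono (hR : ∀ q x, x ≤ R q x) (hh : ∀ i, 0 ≤ h i) :
    Monotone (groupFloor R h d) :=
  monotone_nat_of_le_succ fun q =>
    (groupFloor_le_groupStart hR q).trans (le_add_of_nonneg_right (groupHeight_nonneg hh q))

lemma groupFloor_nonneg (hR : ∀ q x, x ≤ R q x) (hh : ∀ i, 0 ≤ h i) (q : ℕ) :
    0 ≤ groupFloor R h d q :=
  groupFloor_mono hR hh (Nat.zero_le q)

lemma groupFloor_eq_sum (m : ℕ) :
    groupFloor R h d m =
      ∑ q ∈ range m, (groupHeight h d q + (groupStart R h d q - groupFloor R h d q)) := by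
  induction m with
  | zero => rfl
  | succ m ih => rw [sum_range_succ, ← ih, groupFloor_succ]; ring

lemma sum_groupHeight_range {m : ℕ} (hd : ∀ i, d i < m) :
    ∑ q ∈ range m, groupHeight h d q = ∑ i, h i :=
  sum_fiberwise_of_maps_to (fun i _ => mem_range.2 (hd i)) h

variable [LinearOrder ι]

lemma sum_before_add_le (hh : ∀ i, 0 ≤ h i) {i : ι} {s : Finset ι}
    (hs : insert i ({j | d j = d i ∧ j < i} : Finset ι) ⊆ s) :
    ∑ j with d j = d i ∧ j < i, h j + h i ≤ ∑ j ∈ s, h j := by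
  rw [add_comm, ← sum_insert (by simp)]
  exact sum_le_sum_of_subset_of_nonneg hs fun j _ _ => hh j

lemma groupStart_le_stackPos (hh : ∀ i, 0 ≤ h i) (i : ι) :
    groupStart R h d (d i) ≤ stackPos R h d i :=
  le_add_of_nonneg_right (sum_nonneg fun j _ => hh j)

lemma stackPos_nonneg (hR : ∀ q x, x ≤ R q x) (hh : ∀ i, 0 ≤ h i) (i : ι) :
    0 ≤ stackPos R h d i :=
  (groupFloor_nonneg hR hh _).trans
    ((groupFloor_le_groupStart hR _).trans (groupStart_le_stackPos hh i))

lemma stackPos_add_le_groupFloor_succ (hh : ∀ i, 0 ≤ h i) (i : ι) :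
    stackPos R h d i + h i ≤ groupFloor R h d (d i + 1) := by
  rw [groupFloor_succ, stackPos, add_assoc]
  gcongr
  refine sum_before_add_le hh fun j hj => ?_
  rcases mem_insert.1 hj with rfl | hj <;> simp_all

lemma stackPos_add_le_stackPos (hR : ∀ q x, x ≤ R q x) (hh : ∀ i, 0 ≤ h i) {i j : ι}
    (hij : toLex (d i, i) < toLex (d j, j)) : stackPos R h d i + h i ≤ stackPos R h d j := by
  rcases Prod.Lex.toLex_lt_toLex.1 hij with hlt | ⟨heq, hlt⟩
  · calc stackPos R h d i + h i ≤ groupFloor R h d (d i + 1) :=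
          stackPos_add_le_groupFloor_succ hh i
      _ ≤ groupFloor R h d (d j) := groupFloor_mono hR hh hlt
      _ ≤ groupStart R h d (d j) := groupFloor_le_groupStart hR _
      _ ≤ stackPos R h d j := groupStart_le_stackPos hh j
  · dsimp only at heq hlt
    rw [stackPos, stackPos, add_assoc, ← heq]
    gcongr
    refine sum_before_add_le hh fun k hk => ?_
    rcases mem_insert.1 hk with rfl | hk
    · simp [hlt]
    · simp only [mem_filter, mem_univ, true_and] at hk ⊢
      exact ⟨hk.1, hk.2.trans hlt⟩

lemma disjoint_stackPos (hR : ∀ q x, x ≤ R q x) (hh : ∀ i, 0 ≤ h i) {i j : ι} (hij : i ≠ j) :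
    Disjoint (Set.Ico (stackPos R h d i) (stackPos R h d i + h i))
      (Set.Ico (stackPos R h d j) (stackPos R h d j + h j)) := by
  wlog hlt : toLex (d i, i) < toLex (d j, j) generalizing i j
  · refine (this hij.symm (lt_of_le_of_ne (not_lt.1 hlt) ?_)).symm
    simp [hij.symm]
  exact Set.Ico_disjoint_Ico_same.mono_right
    (Set.Ico_subset_Ico_left (stackPos_add_le_stackPos hR hh hlt))

lemma stackPos_eq_of_height_eq {i : ι} {c : ℝ} (hc : ∀ j, d j = d i → h j = c) :
    stackPos R h d i = groupStart R h d (d i) + #{j | d j = d i ∧ j < i} * c := by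
  rw [stackPos, sum_congr rfl fun j hj => hc j (mem_filter.1 hj).2.1, sum_const, nsmul_eq_mul]

end Stack

section Grid

noncomputable def gridRound (Q q : ℕ) (x : ℝ) : ℝ :=
  if 1 ≤ q ∧ q ≤ Q then ⌈x * q⌉₊ / q else x

lemma le_gridRound (Q q : ℕ) (x : ℝ) : x ≤ gridRound Q q x := by
  unfold gridRound
  split_ifs with hq
  · rw [le_div_iff₀ (by exact_mod_cast hq.1)]
    exact Nat.le_ceil _
  · exact le_rfl

lemma gridRound_natCast (Q q k : ℕ) : gridRound Q q k = k := by
  unfold gridRound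
  split_ifs with hq
  · rw [← Nat.cast_mul, Nat.ceil_natCast, Nat.cast_mul,
      mul_div_cancel_right₀ _ (by exact_mod_cast (Nat.one_le_iff_ne_zero.1 hq.1))]
  · rfl

lemma gridRound_zero (Q q : ℕ) : gridRound Q q 0 = 0 := by
  simpa using gridRound_natCast Q q 0

lemma gridRound_lt_add {Q q : ℕ} (hq : 1 ≤ q ∧ q ≤ Q) {x : ℝ} (hx : 0 ≤ x) :
    gridRound Q q x < x + 1 / q := by
  have hq0 : (0 : ℝ) < q := by exact_mod_cast hq.1
  rw [gridRound, if_pos hq, div_lt_iff₀ hq0, add_mul, one_div_mul_cancel hq0.ne']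
  exact Nat.ceil_lt_add_one (by positivity)

variable {Q : ℕ} {h : ι → ℝ} {d : ι → ℕ}

lemma groupFloor_gridRound_one (hd : ∀ i, 1 ≤ d i) : groupFloor (gridRound Q) h d 1 = 0 := by
  rw [groupFloor_succ, groupStart, groupHeight_eq_zero fun i => (Nat.one_le_iff_ne_zero.1 (hd i)),
    groupFloor, gridRound_zero, add_zero]

lemma groupFloor_gridRound_two (hd : ∀ i, 1 ≤ d i) (h_one : ∀ i, d i = 1 → h i = 1) :
    groupFloor (gridRound Q) h d 2 = #{j | d j = 1} := by
  rw [groupFloor_succ, groupStart, groupFloor_gridRound_one hd, groupHeight_eq_card_mul h_one,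
    gridRound_zero, zero_add, mul_one]

lemma groupStart_sub_groupFloor_le (hh : ∀ i, 0 ≤ h i) (hd : ∀ i, 1 ≤ d i)
    (hgrid : ∀ i, d i ≤ Q → h i = 1 / d i) (q : ℕ) :
    groupStart (gridRound Q) h d q - groupFloor (gridRound Q) h d q ≤
      if q ∈ Icc 3 Q then (1 : ℝ) / q else 0 := by
  rw [groupStart]
  by_cases hq : 1 ≤ q ∧ q ≤ Q
  swap
  · rw [gridRound, if_neg hq, sub_self]
    split_ifs <;> positivity
  split_ifs with hq3
  · linarith [gridRound_lt_add hq (groupFloor_nonneg (le_gridRound Q) hh (d := d) q)]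
  · obtain ⟨k, hk⟩ : ∃ k : ℕ, groupFloor (gridRound Q) h d q = k := by
      obtain rfl | rfl : q = 1 ∨ q = 2 := by rw [mem_Icc] at hq3; omega
      · exact ⟨0, by rw [groupFloor_gridRound_one hd, Nat.cast_zero]⟩
      · exact ⟨_, groupFloor_gridRound_two hd fun i hi => by simpa [hi] using hgrid i (by omega)⟩
    rw [hk, gridRound_natCast, sub_self]

variable [LinearOrder ι]

lemma stackPos_gridRound_eq_mul (hgrid : ∀ i, d i ≤ Q → h i = 1 / d i) {i : ι}
    (hi : 1 ≤ d i ∧ d i ≤ Q) : ∃ a : ℕ, stackPos (gridRound Q) h d i = a * (1 / d i) := by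
  refine ⟨⌈groupFloor (gridRound Q) h d (d i) * d i⌉₊ + #{j | d j = d i ∧ j < i}, ?_⟩
  rw [stackPos_eq_of_height_eq fun j hj => by rw [hgrid j (hj ▸ hi.2), hj], groupStart,
    gridRound, if_pos hi]
  push_cast
  ring

lemma stackPos_gridRound_add_le (hh : ∀ i, 0 ≤ h i) (hd : ∀ i, 1 ≤ d i ∧ d i ≤ Q + 1)
    (hgrid : ∀ i, d i ≤ Q → h i = 1 / d i) (i : ι) :
    stackPos (gridRound Q) h d i + h i ≤ ∑ j, h j + ∑ q ∈ Icc 3 Q, (1 : ℝ) / q :=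
  calc stackPos (gridRound Q) h d i + h i
      ≤ groupFloor (gridRound Q) h d (Q + 2) :=
        (stackPos_add_le_groupFloor_succ hh i).trans
          (groupFloor_mono (le_gridRound Q) hh (by have := hd i; omega))
    _ ≤ ∑ q ∈ range (Q + 2), (groupHeight h d q + if q ∈ Icc 3 Q then (1 : ℝ) / q else 0) := by
        rw [groupFloor_eq_sum]
        gcongr with q
        exact groupStart_sub_groupFloor_le hh (fun j => (hd j).1) hgrid q
    _ = ∑ j, h j + ∑ q ∈ Icc 3 Q, (1 : ℝ) / q := by
        rw [sum_add_distrib, sum_groupHeight_range fun j => by have := hd j; omega, sum_ite_mem,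
          inter_eq_right.2 fun q hq => by simp only [mem_Icc, mem_range] at hq ⊢; omega]

end Grid

end GroupedStack

open GroupedStack in
theorem stmt13_general (ε : ℝ) (hε_pos : 0 < ε)
    (n : ℕ) (h : Fin n → ℝ)
    (hh : ∀ i, 0 < h i ∧ h i ≤ 1)
    (htall : ∀ i, ε < h i → ∃ q : ℕ, 0 < q ∧ h i = 1 / (q : ℝ)) :
    ∃ z : Fin n → ℝ, (∀ i, 0 ≤ z i) ∧
      (∀ i j, i ≠ j →
        Disjoint (Set.Ico (z i) (z i + h i)) (Set.Ico (z j) (z j + h j))) ∧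
      (∀ i, ∀ q : ℕ, 0 < q → h i = 1 / (q : ℝ) → ε < h i →
        ∃ a : ℕ, z i = (a : ℝ) * (1 / (q : ℝ))) ∧
      (∀ i, z i + h i ≤ (∑ j, h j) + ∑ q ∈ Finset.Icc 3 ⌊1 / ε⌋₊, (1 : ℝ) / q) := by
  obtain ⟨d, hd, hgrid, hd_tall⟩ := exists_groupIndex hε_pos htall
  have hh₀ : ∀ i, 0 ≤ h i := fun i => (hh i).1.le
  refine ⟨stackPos (gridRound ⌊1 / ε⌋₊) h d, stackPos_nonneg (le_gridRound _) hh₀,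
    fun i j => disjoint_stackPos (le_gridRound _) hh₀, fun i q hq hiq hεi => ?_,
    stackPos_gridRound_add_le hh₀ hd hgrid⟩
  obtain ⟨rfl, hqQ⟩ := hd_tall i q hq hiq hεi
  exact stackPos_gridRound_eq_mul hgrid ⟨(hd i).1, hqQ⟩

/-- Shifting a stack so that tall items are not sliced:
given heights `h₁, …, hₙ ∈ (0,1]` such that every height exceeding `ε` equals
`1/q` for some positive integer `q`, there are positions `zᵢ ≥ 0` with
pairwise disjoint intervals `[zᵢ, zᵢ + hᵢ)` such that every item of height
`1/q > ε` is placed at an integer multiple of `1/q`, and the total height is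
at most `Σᵢ hᵢ + Σ_{q=3}^{⌊1/ε⌋} 1/q`. -/
theorem stmt13 (ε : ℝ) (hε_pos : 0 < ε) (hε_lt : ε < 1)
    (n : ℕ) (h : Fin n → ℝ)
    (hh : ∀ i, 0 < h i ∧ h i ≤ 1)
    (htall : ∀ i, ε < h i → ∃ q : ℕ, 0 < q ∧ h i = 1 / (q : ℝ)) :
    ∃ z : Fin n → ℝ, (∀ i, 0 ≤ z i) ∧
      (∀ i j, i ≠ j →
        Disjoint (Set.Ico (z i) (z i + h i)) (Set.Ico (z j) (z j + h j))) ∧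
      (∀ i, ∀ q : ℕ, 0 < q → h i = 1 / (q : ℝ) → ε < h i →
        ∃ a : ℕ, z i = (a : ℝ) * (1 / (q : ℝ))) ∧
      (∀ i, z i + h i ≤ (∑ j, h j) + ∑ q ∈ Finset.Icc 3 ⌊1 / ε⌋₊, (1 : ℝ) / q) :=
  stmt13_general ε hε_pos n h hh htall
end
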